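/- arXiv:2502.00303 — 6 statements merged into one kernel-verified Lean document; each statement's English description precedes it below -/
import Mathlib

section
/- Let Q be a Dirac potential on [0,b] with integrable entries, and let U : [0,b] → M₂ be absolutely continuous with B·U′(x) + Q(x)·U(x) = 0 for almost every x ∈ [0,b] and U(0) = I. Then U(x) is invertible for every x, the map x ↦ U(x)⁻¹ is absolutely continuous, and (U(x)⁻¹)′ = U(x)⁻¹·Bᵀ·Q(x) for almost every x ∈ [0,b]. -/
noncomputable section

open MeasureTheory Set Filter Topology Polynomial intervalIntegral

abbrev M2 : Type := Matrix (Fin 2) (Fin 2) ℂ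

attribute [local instance] Matrix.normedAddCommGroup Matrix.normedSpace

instance M2.instContinuousENorm : ContinuousENorm M2 := SeminormedAddGroup.toContinuousENorm

/-- The matrix `B` of the Dirac system. -/
def Bmat : M2 := !![0, 1; -1, 0]

/-- The Dirac potential built from the scalar functions `p, q`. -/
def diracPot (p q : ℝ → ℂ) : ℝ → M2 := fun x => !![p x, q x; q x, -p x]

/-- Operator norm of a `2 × 2` complex matrix, induced by the Euclidean norm on `ℂ²`. -/
def opNorm (A : M2) : ℝ := ‖Matrix.toEuclideanCLM (𝕜 := ℂ) A‖

/-- The Legendre polynomial of degree `n` (Rodrigues' formula). -/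
def legendreP (n : ℕ) : Polynomial ℝ :=
  ((2 ^ n * n.factorial : ℝ)⁻¹) • (fun r => derivative r)^[n] ((X ^ 2 - 1 : Polynomial ℝ) ^ n)

/-- The domain `Ω⁺ = {(x,t) : 0 ≤ x ≤ b, |t| ≤ x}`. -/
def OmegaPlus (b : ℝ) : Set (ℝ × ℝ) := {z | 0 ≤ z.1 ∧ z.1 ≤ b ∧ |z.2| ≤ z.1}

/-- `K` is a transmutation kernel for the potential `Q` on `Ω⁺`: it satisfies the
hyperbolic PDE `B⬝∂ₓK + ∂ₜK⬝B = -Q⬝K` together with the two Goursat conditions. -/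
def IsTransKernel (b : ℝ) (Q : ℝ → M2) (K : ℝ → ℝ → M2) : Prop :=
  (∀ x t : ℝ, (x, t) ∈ OmegaPlus b →
      Bmat * deriv (fun s => K s t) x + deriv (fun s => K x s) t * Bmat = -(Q x * K x t)) ∧
  (∀ x ∈ Set.Icc (0 : ℝ) b, Bmat * K x x - K x x * Bmat = -Q x) ∧
  (∀ x ∈ Set.Icc (0 : ℝ) b, Bmat * K x (-x) + K x (-x) * Bmat = 0)

/-- The `n`-th Fourier–Legendre coefficient `K_n(x)` of the kernel `K`. -/
def Kcoef (K : ℝ → ℝ → M2) (n : ℕ) (x : ℝ) : M2 :=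
  ((2 * (n : ℝ) + 1) / 2) • ∫ t in (-x)..x, ((legendreP n).eval (t / x)) • K x t

/-- The truncated kernel `K^N(x,t) = Σ_{n=0}^{N} (1/x)·K_n(x)·P_n(t/x)`. -/
def KN (K : ℝ → ℝ → M2) (N : ℕ) (x t : ℝ) : M2 :=
  ∑ n ∈ Finset.range (N + 1), (x⁻¹ * (legendreP n).eval (t / x)) • Kcoef K n x

/-- The free solution `U₀(λ,x)`. -/
def U0 (lam : ℂ) (x : ℝ) : M2 :=
  !![Complex.cos (lam * x), -Complex.sin (lam * x);
     Complex.sin (lam * x), Complex.cos (lam * x)]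

/-- `U(λ,x) = U₀(λ,x) + ∫_{-x}^{x} K(x,t)·U₀(λ,t) dt`. -/
def Umat (K : ℝ → ℝ → M2) (lam : ℂ) (x : ℝ) : M2 :=
  U0 lam x + ∫ t in (-x)..x, K x t * U0 lam t

/-- `U^N(λ,x) = U₀(λ,x) + ∫_{-x}^{x} K^N(x,t)·U₀(λ,t) dt`. -/
def UmatN (K : ℝ → ℝ → M2) (N : ℕ) (lam : ℂ) (x : ℝ) : M2 :=
  U0 lam x + ∫ t in (-x)..x, KN K N x t * U0 lam t

/-- `θ_n(x) = xⁿ·K_n(x)` for `n ≥ 0`, and `θ_{-1}(x) = -K₀(x)/x`. -/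
def theta (K : ℝ → ℝ → M2) (n : ℤ) : ℝ → M2 := fun x =>
  if n = -1 then -(x⁻¹ • Kcoef K 0 x) else (x ^ n.toNat : ℝ) • Kcoef K n.toNat x

/-- The integral operator `S[H](x) = U(x)·∫₀ˣ U(t)⁻¹·Bᵀ·H(t) dt`, where `U = U(0,·)`. -/
def Sop (U : ℝ → M2) (H : ℝ → M2) (x : ℝ) : M2 :=
  U x * ∫ t in (0 : ℝ)..x, (U t)⁻¹ * Bmat.transpose * H t

/-! For `2 × 2` matrices `adj A = tr A • 1 - A` is linear, so along with `U = 1 + ∫ U'` also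
`adj U = 1 + ∫ adj U'`. The product rule for such primitives (Fubini on a triangle) gives
`adj U · U = 1 + ∫ (adj U · U' + adj U' · U)`, and with `U' = C U`, `C = -Bᵀ Q`, the integrand is
`adj U · (C + adj C) · U = tr C • adj U · U = 0`. Hence `U⁻¹ = adj U = 1 + ∫ adj U'`, and
`adj U' = adj U · adj C = U⁻¹ Bᵀ Q` because `adj C = -C` for the traceless `C`. -/

section BilinearPrimitive

variable {E F G : Type*} [NormedAddCommGroup E] [NormedSpace ℝ E]
  [NormedAddCommGroup F] [NormedSpace ℝ F] [NormedAddCommGroup G] [NormedSpace ℝ G]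
  (L : E →L[ℝ] F →L[ℝ] G) {f : ℝ → E} {g : ℝ → F} {a b : ℝ}

lemma integral_indicator_snd_le_fst_bilinear [CompleteSpace F] [CompleteSpace G]
    (hg : IntegrableOn g (Ioc a b)) {t : ℝ} (ht : t ∈ Ioc a b) :
    ∫ s, {z : ℝ × ℝ | z.2 ≤ z.1}.indicator (fun z => L (f z.1) (g z.2)) (t, s)
        ∂volume.restrict (Ioc a b) = L (f t) (∫ s in a..t, g s) := by
  have hind :
      (fun s => {z : ℝ × ℝ | z.2 ≤ z.1}.indicator (fun z => L (f z.1) (g z.2)) (t, s)) =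
        (Iic t).indicator fun s => L (f t) (g s) := by
    ext s; simp [indicator_apply]
  have hset : Iic t ∩ Ioc a b = Ioc a t := by
    ext s; simp only [mem_inter_iff, mem_Iic, mem_Ioc]
    exact ⟨fun h => ⟨h.2.1, h.1⟩, fun h => ⟨h.2, h.1, h.2.trans ht.2⟩⟩
  rw [hind, MeasureTheory.integral_indicator measurableSet_Iic,
    Measure.restrict_restrict measurableSet_Iic, hset, intervalIntegral.integral_of_le ht.1.le]
  exact (L (f t)).integral_comp_comm (hg.mono_set (Ioc_subset_Ioc_right ht.2))

lemma integral_indicator_compl_snd_le_fst_bilinear [CompleteSpace E] [CompleteSpace G]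
    (hf : IntegrableOn f (Ioc a b)) {s : ℝ} (hs : s ∈ Ioc a b) :
    ∫ t, {z : ℝ × ℝ | z.2 ≤ z.1}ᶜ.indicator (fun z => L (f z.1) (g z.2)) (t, s)
        ∂volume.restrict (Ioc a b) = L (∫ t in a..s, f t) (g s) := by
  have hind :
      (fun t => {z : ℝ × ℝ | z.2 ≤ z.1}ᶜ.indicator (fun z => L (f z.1) (g z.2)) (t, s)) =
        (Iio s).indicator fun t => L.flip (g s) (f t) := by
    ext t; simp [indicator_apply]
  have hset : Iio s ∩ Ioc a b = Ioo a s := by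
    ext t; simp only [mem_inter_iff, mem_Iio, mem_Ioc, mem_Ioo]
    exact ⟨fun h => ⟨h.2.1, h.1⟩, fun h => ⟨h.2, h.1, h.2.le.trans hs.2⟩⟩
  rw [hind, MeasureTheory.integral_indicator measurableSet_Iio,
    Measure.restrict_restrict measurableSet_Iio, hset, ← integral_Ioc_eq_integral_Ioo,
    intervalIntegral.integral_of_le hs.1.le]
  exact (L.flip (g s)).integral_comp_comm (hf.mono_set (Ioc_subset_Ioc_right hs.2))

lemma integrable_bilinear_prod (hf : IntegrableOn f (Ioc a b)) (hg : IntegrableOn g (Ioc a b)) :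
    Integrable (fun z : ℝ × ℝ => L (f z.1) (g z.2))
      ((volume.restrict (Ioc a b)).prod (volume.restrict (Ioc a b))) :=
  Integrable.op_fst_snd L.continuous₂ ⟨‖L‖, L.le_opNorm₂⟩ hf hg

lemma measurableSet_snd_le_fst : MeasurableSet {z : ℝ × ℝ | z.2 ≤ z.1} :=
  measurableSet_le measurable_snd measurable_fst

lemma integrableOn_bilinear_primitive_right [CompleteSpace F] [CompleteSpace G]
    (hf : IntegrableOn f (Ioc a b)) (hg : IntegrableOn g (Ioc a b)) :
    IntegrableOn (fun t => L (f t) (∫ s in a..t, g s)) (Ioc a b) :=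
  ((integrable_bilinear_prod L hf hg).indicator measurableSet_snd_le_fst).integral_prod_left.congr
    ((ae_restrict_mem measurableSet_Ioc).mono fun _ ht =>
      integral_indicator_snd_le_fst_bilinear L hg ht)

lemma integrableOn_primitive_bilinear_left [CompleteSpace E] [CompleteSpace G]
    (hf : IntegrableOn f (Ioc a b)) (hg : IntegrableOn g (Ioc a b)) :
    IntegrableOn (fun t => L (∫ s in a..t, f s) (g t)) (Ioc a b) :=
  ((integrable_bilinear_prod L hf hg).indicator
      measurableSet_snd_le_fst.compl).integral_prod_right.congr
    ((ae_restrict_mem measurableSet_Ioc).mono fun _ hs =>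
      integral_indicator_compl_snd_le_fst_bilinear L hf hs)

/-- Fubini on the square `(a, b]²`, cut along its diagonal. -/
theorem integral_bilinear_primitive_add [CompleteSpace E] [CompleteSpace F] [CompleteSpace G]
    (hf : IntegrableOn f (Ioc a b)) (hg : IntegrableOn g (Ioc a b)) :
    (∫ t in Ioc a b, L (f t) (∫ s in a..t, g s)) +
        ∫ t in Ioc a b, L (∫ s in a..t, f s) (g t) =
      L (∫ t in Ioc a b, f t) (∫ t in Ioc a b, g t) := by
  have hΦ := integrable_bilinear_prod L hf hg
  have hT := measurableSet_snd_le_fst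
  have lower : ∫ t in Ioc a b, L (f t) (∫ s in a..t, g s)
      = ∫ z in {z : ℝ × ℝ | z.2 ≤ z.1}, L (f z.1) (g z.2)
          ∂(volume.restrict (Ioc a b)).prod (volume.restrict (Ioc a b)) := by
    rw [← MeasureTheory.integral_indicator hT, integral_prod _ (hΦ.indicator hT)]
    exact setIntegral_congr_fun measurableSet_Ioc fun t ht =>
      (integral_indicator_snd_le_fst_bilinear L hg ht).symm
  have upper : ∫ t in Ioc a b, L (∫ s in a..t, f s) (g t)
      = ∫ z in {z : ℝ × ℝ | z.2 ≤ z.1}ᶜ, L (f z.1) (g z.2)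
          ∂(volume.restrict (Ioc a b)).prod (volume.restrict (Ioc a b)) := by
    rw [← MeasureTheory.integral_indicator hT.compl,
      integral_prod_symm _ (hΦ.indicator hT.compl)]
    exact setIntegral_congr_fun measurableSet_Ioc fun s hs =>
      (integral_indicator_compl_snd_le_fst_bilinear L hf hs).symm
  rw [lower, upper, integral_add_compl hT hΦ, integral_prod _ hΦ]
  simp_rw [fun t => (L (f t)).integral_comp_comm hg]
  exact (L.flip _).integral_comp_comm hf

theorem integral_bilinear_eq_sub_of_eq_primitive [CompleteSpace E] [CompleteSpace F]
    [CompleteSpace G] (hab : a ≤ b) (hf : IntegrableOn f (Ioc a b))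
    (hg : IntegrableOn g (Ioc a b)) {u : ℝ → E} {v : ℝ → F} {u₀ : E} {v₀ : F}
    (hu : ∀ t ∈ Icc a b, u t = u₀ + ∫ s in a..t, f s)
    (hv : ∀ t ∈ Icc a b, v t = v₀ + ∫ s in a..t, g s) :
    ∫ t in a..b, L (u t) (g t) + L (f t) (v t) = L (u b) (v b) - L u₀ v₀ := by
  have expand : ∀ t ∈ Ioc a b, L (u t) (g t) + L (f t) (v t)
      = (L u₀ (g t) + L.flip v₀ (f t))
        + (L (f t) (∫ s in a..t, g s) + L (∫ s in a..t, f s) (g t)) := fun t ht => by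
    rw [hu t (Ioc_subset_Icc_self ht), hv t (Ioc_subset_Icc_self ht)]
    simp only [map_add, add_apply, ContinuousLinearMap.flip_apply]
    abel
  have hu₀ := (L u₀).integrable_comp hg
  have hv₀ := (L.flip v₀).integrable_comp hf
  have hfg := integrableOn_bilinear_primitive_right L hf hg
  have hgf := integrableOn_primitive_bilinear_left L hf hg
  rw [intervalIntegral.integral_of_le hab, setIntegral_congr_fun measurableSet_Ioc expand,
    integral_add (hu₀.fun_add hv₀) (Integrable.fun_add hfg hgf), integral_add hu₀ hv₀,
    integral_add hfg hgf, integral_bilinear_primitive_add L hf hg, (L u₀).integral_comp_comm hg,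
    (L.flip v₀).integral_comp_comm hf, hu b (right_mem_Icc.2 hab), hv b (right_mem_Icc.2 hab),
    intervalIntegral.integral_of_le hab, intervalIntegral.integral_of_le hab]
  simp only [map_add, add_apply, ContinuousLinearMap.flip_apply]
  abel

end BilinearPrimitive

theorem Matrix.adjugate_fin_two_eq_trace_smul_sub {R : Type*} [CommRing R]
    (A : Matrix (Fin 2) (Fin 2) R) : A.adjugate = A.trace • 1 - A := by
  rw [adjugate_fin_two]
  ext i j
  fin_cases i <;> fin_cases j <;> simp [trace_fin_two]

theorem Matrix.adjugate_fin_two_of_trace_eq_zero {R : Type*} [CommRing R]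
    {A : Matrix (Fin 2) (Fin 2) R} (hA : A.trace = 0) : A.adjugate = -A := by
  rw [adjugate_fin_two_eq_trace_smul_sub, hA, zero_smul, zero_sub]

theorem Matrix.adjugate_mul_add_adjugate_mul_eq_zero {R : Type*} [CommRing R]
    {U U' C : Matrix (Fin 2) (Fin 2) R} (hU' : U' = C * U) (hC : C.trace = 0) :
    U.adjugate * U' + U'.adjugate * U = 0 := by
  rw [hU', adjugate_mul_distrib, adjugate_fin_two_of_trace_eq_zero hC, Matrix.mul_assoc,
    ← Matrix.mul_add, ← Matrix.add_mul, add_neg_cancel, Matrix.zero_mul, Matrix.mul_zero]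

def adjugateCLM : M2 →L[ℂ] M2 :=
  LinearMap.toContinuousLinearMap
    { toFun := Matrix.adjugate
      map_add' := fun A B => by
        simp only [Matrix.adjugate_fin_two_eq_trace_smul_sub, Matrix.trace_add, add_smul]; abel
      map_smul' := fun c A => by
        simp only [Matrix.adjugate_fin_two_eq_trace_smul_sub, Matrix.trace_smul, smul_sub,
          smul_assoc, RingHom.id_apply] }

def mulCLM : M2 →L[ℝ] M2 →L[ℝ] M2 :=
  LinearMap.toContinuousLinearMap
    (LinearMap.toContinuousLinearMap.toLinearMap ∘ₗ LinearMap.mul ℝ M2)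

theorem adjugate_add_intervalIntegral (A : M2) {U' : ℝ → M2} {a x : ℝ} (hax : a ≤ x)
    (hU' : IntegrableOn U' (Ioc a x)) :
    (A + ∫ t in a..x, U' t).adjugate = A.adjugate + ∫ t in a..x, (U' t).adjugate := by
  rw [intervalIntegral.integral_of_le hax, intervalIntegral.integral_of_le hax]
  exact (map_add adjugateCLM _ _).trans (congrArg _ (adjugateCLM.integral_comp_comm hU').symm)

theorem adjugate_mul_self_eq_add_integral {a b : ℝ} {U U' : ℝ → M2} {U₀ : M2}
    (hU' : IntegrableOn U' (Icc a b)) (hU : ∀ x ∈ Icc a b, U x = U₀ + ∫ t in a..x, U' t)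
    {x : ℝ} (hx : x ∈ Icc a b) :
    (U x).adjugate * U x
      = U₀.adjugate * U₀ + ∫ t in a..x, (U t).adjugate * U' t + (U' t).adjugate * U t := by
  have hU'x : IntegrableOn U' (Ioc a x) :=
    hU'.mono_set (Ioc_subset_Icc_self.trans (Icc_subset_Icc_right hx.2))
  have hUx : ∀ t ∈ Icc a x, U t = U₀ + ∫ s in a..t, U' s := fun t ht =>
    hU t ⟨ht.1, ht.2.trans hx.2⟩
  have hadj : ∀ t ∈ Icc a x, (U t).adjugate = U₀.adjugate + ∫ s in a..t, (U' s).adjugate :=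
    fun t ht => by
      rw [hUx t ht, adjugate_add_intervalIntegral _ ht.1
        (hU'x.mono_set (Ioc_subset_Ioc_right ht.2))]
  exact (sub_eq_iff_eq_add'.1 (integral_bilinear_eq_sub_of_eq_primitive mulCLM hx.1
    (adjugateCLM.integrable_comp hU'x) hU'x hadj hUx).symm)

theorem Bmat_transpose_mul_self : Bmat.transpose * Bmat = 1 := by
  ext i j; fin_cases i <;> fin_cases j <;> simp [Bmat, Matrix.mul_apply, Fin.sum_univ_two]

theorem trace_Bmat_transpose_mul_diracPot (p q : ℝ → ℂ) (x : ℝ) :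
    (Bmat.transpose * diracPot p q x).trace = 0 := by
  simp [Bmat, diracPot, Matrix.trace_fin_two, Matrix.mul_apply]

theorem eq_neg_Bmat_transpose_mul_of_Bmat_mul_add_eq_zero {X Y Q : M2}
    (h : Bmat * X + Q * Y = 0) : X = -(Bmat.transpose * Q) * Y := by
  calc X = Bmat.transpose * (Bmat * X) := by
        rw [← Matrix.mul_assoc, Bmat_transpose_mul_self, Matrix.one_mul]
    _ = -(Bmat.transpose * Q) * Y := by
        rw [eq_neg_of_add_eq_zero_left h, Matrix.mul_neg, Matrix.neg_mul, Matrix.mul_assoc]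

theorem statement3_general (b : ℝ) (p q : ℝ → ℂ)
    (U U' : ℝ → M2)
    (hU'int : IntegrableOn U' (Set.Icc 0 b))
    (hUrep : ∀ x ∈ Set.Icc 0 b, U x = 1 + ∫ t in (0 : ℝ)..x, U' t)
    (hode : ∀ᵐ x ∂(volume : Measure ℝ), x ∈ Set.Icc 0 b →
      Bmat * U' x + diracPot p q x * U x = 0) :
    (∀ x ∈ Set.Icc 0 b, IsUnit (U x)) ∧
    ∃ W : ℝ → M2, IntegrableOn W (Set.Icc 0 b) ∧
      (∀ x ∈ Set.Icc 0 b, (U x)⁻¹ = 1 + ∫ t in (0 : ℝ)..x, W t) ∧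
      ∀ᵐ x ∂(volume : Measure ℝ), x ∈ Set.Icc 0 b →
        W x = (U x)⁻¹ * Bmat.transpose * diracPot p q x := by
  have hU'eq : ∀ᵐ t ∂(volume : Measure ℝ), t ∈ Icc 0 b →
      U' t = -(Bmat.transpose * diracPot p q t) * U t := by
    filter_upwards [hode] with t ht hmem
    exact eq_neg_Bmat_transpose_mul_of_Bmat_mul_add_eq_zero (ht hmem)
  have htrace : ∀ t, (-(Bmat.transpose * diracPot p q t)).trace = 0 := fun t => by
    rw [Matrix.trace_neg, trace_Bmat_transpose_mul_diracPot, neg_zero]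
  have hleft : ∀ x ∈ Icc 0 b, (U x).adjugate * U x = 1 := fun x hx => by
    rw [adjugate_mul_self_eq_add_integral hU'int hUrep hx, Matrix.adjugate_one, Matrix.mul_one,
      add_eq_left, intervalIntegral.integral_of_le hx.1]
    refine integral_eq_zero_of_ae ?_
    filter_upwards [ae_restrict_of_ae hU'eq, ae_restrict_mem measurableSet_Ioc] with t ht hmem
    exact Matrix.adjugate_mul_add_adjugate_mul_eq_zero (ht ⟨hmem.1.le, hmem.2.trans hx.2⟩)
      (htrace t)
  have hinv : ∀ x ∈ Icc 0 b, (U x)⁻¹ = (U x).adjugate := fun x hx =>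
    Matrix.inv_eq_left_inv (hleft x hx)
  refine ⟨fun x hx => (Matrix.isUnit_iff_isUnit_det _).2
      (Matrix.isUnit_det_of_left_inverse (hleft x hx)),
    fun t => (U' t).adjugate, adjugateCLM.integrable_comp hU'int, fun x hx => ?_, ?_⟩
  · rw [hinv x hx, hUrep x hx, adjugate_add_intervalIntegral _ hx.1
      (hU'int.mono_set (Ioc_subset_Icc_self.trans (Icc_subset_Icc_right hx.2))),
      Matrix.adjugate_one]
  · filter_upwards [hU'eq] with t ht hmem
    rw [ht hmem, Matrix.adjugate_mul_distrib, Matrix.adjugate_fin_two_of_trace_eq_zero (htrace t),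
      neg_neg, hinv t hmem, Matrix.mul_assoc]

/-- `U(x)⁻¹` is absolutely continuous and `(U⁻¹)' = U⁻¹·Bᵀ·Q` a.e. -/
theorem statement3 (b : ℝ) (hb : 0 < b) (p q : ℝ → ℂ)
    (hQ : IntegrableOn (diracPot p q) (Set.Icc 0 b))
    (U U' : ℝ → M2)
    (hU'int : IntegrableOn U' (Set.Icc 0 b))
    (hUrep : ∀ x ∈ Set.Icc 0 b, U x = 1 + ∫ t in (0 : ℝ)..x, U' t)
    (hode : ∀ᵐ x ∂(volume : Measure ℝ), x ∈ Set.Icc 0 b →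
      Bmat * U' x + diracPot p q x * U x = 0) :
    (∀ x ∈ Set.Icc 0 b, IsUnit (U x)) ∧
    ∃ W : ℝ → M2, IntegrableOn W (Set.Icc 0 b) ∧
      (∀ x ∈ Set.Icc 0 b, (U x)⁻¹ = 1 + ∫ t in (0 : ℝ)..x, W t) ∧
      ∀ᵐ x ∂(volume : Measure ℝ), x ∈ Set.Icc 0 b →
        W x = (U x)⁻¹ * Bmat.transpose * diracPot p q x :=
  statement3_general b p q U U' hU'int hUrep hode

end
end

section
/- Let Q be a Dirac potential on [0,b] with continuously differentiable entries and let K be a continuously differentiable transmutation kernel for Q. Then the matrix function V(x) := I + ∫_{−x}^{x} K(x,t) dt satisfies B·V′(x) + Q(x)·V(x) = 0 for all x ∈ [0,b] and V(0) = I. Equivalently, U(0,x) = I + 2·K₀(x), where K₀(x) = (1/2)·∫_{−x}^{x} K(x,t) dt is the zeroth Fourier–Legendre coefficient of the kernel and U(0,·) denotes the matrix solution of B·Y′ + Q·Y = 0 with value I at 0. -/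
noncomputable section

open MeasureTheory Set Filter Topology Polynomial intervalIntegral

attribute [local instance] Matrix.normedAddCommGroup Matrix.normedSpace

/-!
Substituting `t = x s` gives `∫_{-x}^{x} K(x,t) dt = x ∫_{-1}^{1} K(x, x s) ds`, an integral over a
fixed interval of a function that is `C¹` on a rectangle, so it can be differentiated under the
integral sign. Since `∂ₛ (s K(x, x s)) = K(x, x s) + x s ∂ₜK(x, x s)`, this yields the Leibniz
formula `V' = K(x,x) + K(x,-x) + ∫_{-x}^{x} ∂ₓK(x,t) dt`. The kernel equation turns
`B ∂ₓK + Q K` into `-∂ₜK B`, whose integral is `-(K(x,x) - K(x,-x)) B`, so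
`B V' + Q V = (B K(x,x) - K(x,x) B + Q) + (B K(x,-x) + K(x,-x) B)`, which vanishes by the two
Goursat conditions. Finally `P₀ = 1`, so `V = 1 + 2 K₀`.
-/

section ParametricIntegral

variable {E : Type*} [NormedAddCommGroup E] [NormedSpace ℝ E]

theorem continuousOn_intervalIntegral_of_continuousOn_prod {f : ℝ → ℝ → E} {a b c d : ℝ}
    (hab : a ≤ b) (hcd : c ≤ d) (hf : ContinuousOn (Function.uncurry f) (Icc a b ×ˢ Icc c d)) :
    ContinuousOn (fun x => ∫ t in c..d, f x t) (Icc a b) := by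
  let g : ℝ → ℝ → E := fun x t => f (projIcc a b hab x) (projIcc c d hcd t)
  have hg : Continuous (Function.uncurry g) :=
    hf.comp_continuous
      (f := fun z : ℝ × ℝ => ((projIcc a b hab z.1 : ℝ), (projIcc c d hcd z.2 : ℝ))) (by fun_prop) fun z => ⟨(projIcc a b hab z.1).2, (projIcc c d hcd z.2).2⟩
  refine (continuous_parametric_intervalIntegral_of_continuous' hg c d).continuousOn.congr
    fun x hx => integral_congr fun t ht => ?_
  rw [uIcc_of_le hcd] at ht
  simp [g, projIcc_of_mem hab hx, projIcc_of_mem hcd ht]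

theorem integral_eq_sub_of_hasDerivWithinAt_Icc [CompleteSpace E] {f f' : ℝ → E} {a b : ℝ}
    (hab : a ≤ b) (hf : ∀ x ∈ Icc a b, HasDerivWithinAt f (f' x) (Icc a b) x)
    (hf' : ContinuousOn f' (Icc a b)) :
    ∫ x in a..b, f' x = f b - f a :=
  integral_eq_sub_of_hasDerivAt_of_le hab
    (fun x hx => (hf x hx).continuousWithinAt)
    (fun x hx => (hf x (Ioo_subset_Icc_self hx)).hasDerivAt (Icc_mem_nhds hx.1 hx.2))
    (hf'.intervalIntegrable_of_Icc hab)

theorem hasDerivWithinAt_intervalIntegral_of_hasDerivWithinAt [CompleteSpace E]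
    {f f' : ℝ → ℝ → E} {a b c d : ℝ} (hab : a ≤ b) (hcd : c ≤ d)
    (hf : ContinuousOn (Function.uncurry f) (Icc a b ×ˢ Icc c d))
    (hf' : ContinuousOn (Function.uncurry f') (Icc a b ×ˢ Icc c d))
    (hderiv : ∀ x ∈ Icc a b, ∀ t ∈ Icc c d, HasDerivWithinAt (f · t) (f' x t) (Icc a b) x)
    {x : ℝ} (hx : x ∈ Icc a b) :
    HasDerivWithinAt (fun y => ∫ t in c..d, f y t) (∫ t in c..d, f' x t) (Icc a b) x := by
  set φ : ℝ → E := fun y => ∫ t in c..d, f' y t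
  have hφ : ContinuousOn φ (Icc a b) :=
    continuousOn_intervalIntegral_of_continuousOn_prod hab hcd hf'
  have hslice : ∀ y ∈ Icc a b, IntervalIntegrable (f y) volume c d := fun y hy =>
    (hf.comp (by fun_prop : Continuous fun t => (y, t)).continuousOn
      fun _ ht => ⟨hy, ht⟩).intervalIntegrable_of_Icc hcd
  have hprimitive : ∀ y ∈ Icc a b,
      ∫ t in c..d, f y t = (∫ t in c..d, f a t) + ∫ s in a..y, φ s := by
    intro y hy
    have hay : Icc a y ⊆ Icc a b := Icc_subset_Icc_right hy.2
    have hftc : ∀ t ∈ Icc c d, ∫ s in a..y, f' s t = f y t - f a t := fun t ht =>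
      integral_eq_sub_of_hasDerivWithinAt_Icc hy.1
        (fun s hs => (hderiv s (hay hs) t ht).mono hay)
        (hf'.comp (by fun_prop : Continuous fun s => (s, t)).continuousOn
          fun _ hs => ⟨hay hs, ht⟩)
    have hswap : ∫ t in c..d, ∫ s in a..y, f' s t = ∫ s in a..y, φ s :=
      (intervalIntegral_intervalIntegral_swap ((hf'.integrableOn_compact
        (isCompact_Icc.prod isCompact_Icc)).mono_set (prod_mono
          ((uIoc_of_le hy.1).trans_subset (Ioc_subset_Icc_self.trans hay))
          ((uIoc_of_le hcd).trans_subset Ioc_subset_Icc_self)))).symm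
    rw [← hswap, ← sub_eq_iff_eq_add', ← integral_sub (hslice y hy) (hslice a ⟨le_rfl, hab⟩)]
    refine integral_congr fun t ht => ?_
    rw [uIcc_of_le hcd] at ht
    exact (hftc t ht).symm
  have : Fact (x ∈ Icc a b) := ⟨hx⟩
  have hftc : HasDerivWithinAt (fun y => (∫ t in c..d, f a t) + ∫ s in a..y, φ s) (φ x)
      (Icc a b) x :=
    (integral_hasDerivWithinAt_right
      ((hφ.mono (Icc_subset_Icc_right hx.2)).intervalIntegrable_of_Icc hx.1)
      (hφ.stronglyMeasurableAtFilter_nhdsWithin measurableSet_Icc x) (hφ x hx)).const_add _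
  exact hftc.congr hprimitive (hprimitive x hx)

theorem integral_neg_self_eq_smul_integral_comp_mul (f : ℝ → E) (x : ℝ) :
    ∫ t in (-x)..x, f t = x • ∫ s in (-1)..1, f (x * s) := by
  rw [smul_integral_comp_mul_left, mul_neg_one, mul_one]

end ParametricIntegral

theorem intervalIntegral_mul_left_M2 (A : M2) {f : ℝ → M2} {a c : ℝ}
    (hf : ContinuousOn f (uIcc a c)) : ∫ t in a..c, A * f t = A * ∫ t in a..c, f t :=
  (LinearMap.mulLeft ℝ A).toContinuousLinearMap.intervalIntegral_comp_comm hf.intervalIntegrable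

theorem intervalIntegral_mul_right_M2 (A : M2) {f : ℝ → M2} {a c : ℝ}
    (hf : ContinuousOn f (uIcc a c)) : ∫ t in a..c, f t * A = (∫ t in a..c, f t) * A :=
  (LinearMap.mulRight ℝ A).toContinuousLinearMap.intervalIntegral_comp_comm hf.intervalIntegrable

section OmegaPlus

theorem convex_omegaPlus (b : ℝ) : Convex ℝ (OmegaPlus b) := by
  rintro ⟨x, t⟩ ⟨hx0, hxb, hxt⟩ ⟨y, s⟩ ⟨hy0, hyb, hys⟩ α β hα hβ hαβ
  rw [abs_le] at hxt hys
  refine ⟨?_, ?_, abs_le.2 ⟨?_, ?_⟩⟩ <;> simp only [Prod.smul_mk, Prod.mk_add_mk, smul_eq_mul] <;>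
    nlinarith

theorem interior_omegaPlus_nonempty {b : ℝ} (hb : 0 < b) : (interior (OmegaPlus b)).Nonempty := by
  let U : Set (ℝ × ℝ) := {z | 0 < z.1 ∧ z.1 < b ∧ |z.2| < z.1}
  have hU : IsOpen U := (isOpen_lt continuous_const continuous_fst).inter
    ((isOpen_lt continuous_fst continuous_const).inter
      (isOpen_lt continuous_snd.abs continuous_fst))
  have hUΩ : U ⊆ OmegaPlus b := fun z hz => ⟨hz.1.le, hz.2.1.le, hz.2.2.le⟩
  exact ⟨(b / 2, 0), interior_maximal hUΩ hU ⟨by linarith, by linarith, by simpa using hb⟩⟩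

theorem omegaPlus_subset_closure_interior {b : ℝ} (hb : 0 < b) :
    OmegaPlus b ⊆ closure (interior (OmegaPlus b)) := by
  rw [(convex_omegaPlus b).closure_interior_eq_closure_of_nonempty_interior
    (interior_omegaPlus_nonempty hb)]
  exact subset_closure

theorem mapsTo_omegaPlus_slice {b x : ℝ} (hx : x ∈ Icc 0 b) :
    MapsTo (fun t : ℝ => (x, t)) (Icc (-x) x) (OmegaPlus b) :=
  fun _ ht => ⟨hx.1, hx.2, abs_le.2 ht⟩

theorem mapsTo_omegaPlus_rescale (b : ℝ) :
    MapsTo (fun z : ℝ × ℝ => (z.1, z.1 * z.2)) (Icc 0 b ×ˢ Icc (-1) 1) (OmegaPlus b) := by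
  rintro ⟨x, s⟩ ⟨⟨hx0, hxb⟩, hs⟩
  refine ⟨hx0, hxb, ?_⟩
  simp only [abs_mul, abs_of_nonneg hx0]
  exact mul_le_of_le_one_right hx0 (abs_le.2 hs)

theorem ContinuousOn.comp_omegaPlus_slice {X : Type*} [TopologicalSpace X] {F : ℝ × ℝ → X}
    {b x : ℝ} (hF : ContinuousOn F (OmegaPlus b)) (hx : x ∈ Icc 0 b) :
    ContinuousOn (fun t => F (x, t)) (Icc (-x) x) :=
  hF.comp (by fun_prop) (mapsTo_omegaPlus_slice hx)

theorem ContinuousOn.comp_omegaPlus_rescale {X : Type*} [TopologicalSpace X] {F : ℝ × ℝ → X}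
    {b : ℝ} (hF : ContinuousOn F (OmegaPlus b)) :
    ContinuousOn (fun z : ℝ × ℝ => F (z.1, z.1 * z.2)) (Icc 0 b ×ˢ Icc (-1) 1) :=
  hF.comp (by fun_prop) (mapsTo_omegaPlus_rescale b)

theorem ContinuousOn.comp_omegaPlus_rescale_slice {X : Type*} [TopologicalSpace X]
    {F : ℝ × ℝ → X} {b x : ℝ} (hF : ContinuousOn F (OmegaPlus b)) (hx : x ∈ Icc 0 b) :
    ContinuousOn (fun r => F (x, x * r)) (Icc (-1) 1) :=
  hF.comp_omegaPlus_rescale.comp (f := fun r => (x, r)) (by fun_prop) fun _ hr => ⟨hx, hr⟩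

end OmegaPlus

section TransmutationKernel

variable {b : ℝ} {K : ℝ → ℝ → M2}

/-- The partial derivative `∂ₓK`, taken within `Ω⁺` so that it makes sense up to the boundary;
`kernelDerivT` is `∂ₜK`. -/
def kernelDerivX (b : ℝ) (K : ℝ → ℝ → M2) (z : ℝ × ℝ) : M2 :=
  fderivWithin ℝ (fun w : ℝ × ℝ => K w.1 w.2) (OmegaPlus b) z (1, 0)

def kernelDerivT (b : ℝ) (K : ℝ → ℝ → M2) (z : ℝ × ℝ) : M2 :=
  fderivWithin ℝ (fun w : ℝ × ℝ => K w.1 w.2) (OmegaPlus b) z (0, 1)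

theorem continuousOn_fderivWithin_kernel (hb : 0 < b)
    (hK : ContDiffOn ℝ 1 (fun z : ℝ × ℝ => K z.1 z.2) (OmegaPlus b)) :
    ContinuousOn (fderivWithin ℝ (fun z : ℝ × ℝ => K z.1 z.2) (OmegaPlus b)) (OmegaPlus b) :=
  hK.continuousOn_fderivWithin
    (uniqueDiffOn_convex (convex_omegaPlus b) (interior_omegaPlus_nonempty hb)) le_rfl

theorem continuousOn_kernelDerivX (hb : 0 < b)
    (hK : ContDiffOn ℝ 1 (fun z : ℝ × ℝ => K z.1 z.2) (OmegaPlus b)) :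
    ContinuousOn (kernelDerivX b K) (OmegaPlus b) :=
  (continuousOn_fderivWithin_kernel hb hK).clm_apply continuousOn_const

theorem continuousOn_kernelDerivT (hb : 0 < b)
    (hK : ContDiffOn ℝ 1 (fun z : ℝ × ℝ => K z.1 z.2) (OmegaPlus b)) :
    ContinuousOn (kernelDerivT b K) (OmegaPlus b) :=
  (continuousOn_fderivWithin_kernel hb hK).clm_apply continuousOn_const

theorem hasDerivWithinAt_kernel_comp
    (hK : ContDiffOn ℝ 1 (fun z : ℝ × ℝ => K z.1 z.2) (OmegaPlus b))
    {γ : ℝ → ℝ × ℝ} {γ' : ℝ × ℝ} {S : Set ℝ} {u : ℝ} (hγ : HasDerivWithinAt γ γ' S u)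
    (hmaps : MapsTo γ S (OmegaPlus b)) (hu : u ∈ S) :
    HasDerivWithinAt (fun r => K (γ r).1 (γ r).2)
      (γ'.1 • kernelDerivX b K (γ u) + γ'.2 • kernelDerivT b K (γ u)) S u := by
  have hγ' : γ' = γ'.1 • ((1 : ℝ), (0 : ℝ)) + γ'.2 • ((0 : ℝ), (1 : ℝ)) := by ext <;> simp
  have h := (hK.differentiableOn one_ne_zero _ (hmaps hu)).hasFDerivWithinAt
    |>.comp_hasDerivWithinAt u hγ hmaps
  rw [hγ', map_add, map_smul, map_smul] at h
  exact h

/-- `IsTransKernel` states the kernel equation with `deriv`, which is junk on the boundary of `Ω⁺`;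
at interior points it agrees with the one-sided partials, and continuity does the rest. -/
theorem kernel_pde_of_mem_omegaPlus (hb : 0 < b) {Q : ℝ → M2} (hQ : ContinuousOn Q (Icc 0 b))
    (hK : ContDiffOn ℝ 1 (fun z : ℝ × ℝ => K z.1 z.2) (OmegaPlus b))
    (hpde : ∀ x t : ℝ, (x, t) ∈ OmegaPlus b →
      Bmat * deriv (fun s => K s t) x + deriv (fun s => K x s) t * Bmat = -(Q x * K x t))
    {z : ℝ × ℝ} (hz : z ∈ OmegaPlus b) :
    Bmat * kernelDerivX b K z + kernelDerivT b K z * Bmat = -(Q z.1 * K z.1 z.2) := by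
  have hinterior : EqOn (fun z => Bmat * kernelDerivX b K z + kernelDerivT b K z * Bmat)
      (fun z => -(Q z.1 * K z.1 z.2)) (interior (OmegaPlus b)) := by
    rintro ⟨x, t⟩ hw
    have hfd : HasFDerivAt (fun z : ℝ × ℝ => K z.1 z.2)
        (fderivWithin ℝ (fun z : ℝ × ℝ => K z.1 z.2) (OmegaPlus b) (x, t)) (x, t) :=
      (hK.differentiableOn one_ne_zero _ (interior_subset hw)).hasFDerivWithinAt.hasFDerivAt
        (mem_interior_iff_mem_nhds.1 hw)
    have hx : deriv (fun s => K s t) x = kernelDerivX b K (x, t) := HasDerivAt.deriv <|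
      hfd.comp_hasDerivAt (l := fun z : ℝ × ℝ => K z.1 z.2) x
        ((hasDerivAt_id' x).prodMk (hasDerivAt_const x t))
    have ht : deriv (fun s => K x s) t = kernelDerivT b K (x, t) := HasDerivAt.deriv <|
      hfd.comp_hasDerivAt (l := fun z : ℝ × ℝ => K z.1 z.2) t
        ((hasDerivAt_const t x).prodMk (hasDerivAt_id' t))
    have h := hpde x t (interior_subset hw)
    rwa [hx, ht] at h
  refine hinterior.of_subset_closure ?_ ?_ interior_subset (omegaPlus_subset_closure_interior hb) hz
  · exact (continuousOn_const.mul (continuousOn_kernelDerivX hb hK)).add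
      ((continuousOn_kernelDerivT hb hK).mul continuousOn_const)
  · exact ((hQ.comp continuousOn_fst fun z hz => ⟨hz.1, hz.2.1⟩).mul hK.continuousOn).neg

theorem hasDerivWithinAt_integral_rescaled (hb : 0 < b)
    (hK : ContDiffOn ℝ 1 (fun z : ℝ × ℝ => K z.1 z.2) (OmegaPlus b)) {x : ℝ} (hx : x ∈ Icc 0 b) :
    HasDerivWithinAt (fun y => ∫ s in (-1)..1, K y (y * s))
      (∫ s in (-1)..1, (kernelDerivX b K (x, x * s) + s • kernelDerivT b K (x, x * s)))
      (Icc 0 b) x := by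
  refine hasDerivWithinAt_intervalIntegral_of_hasDerivWithinAt (f := fun y s => K y (y * s))
    (f' := fun y s => kernelDerivX b K (y, y * s) + s • kernelDerivT b K (y, y * s))
    hb.le (by norm_num) hK.continuousOn.comp_omegaPlus_rescale
    ((continuousOn_kernelDerivX hb hK).comp_omegaPlus_rescale.add
      (continuousOn_snd.smul (continuousOn_kernelDerivT hb hK).comp_omegaPlus_rescale))
    (fun y hy s hs => ?_) hx
  have hγ : HasDerivWithinAt (fun y : ℝ => (y, y * s)) ((1 : ℝ), s) (Icc 0 b) y :=
    (hasDerivAt_id' y).hasDerivWithinAt.prodMk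
      (by simpa using ((hasDerivAt_id' y).mul_const s).hasDerivWithinAt)
  have h := hasDerivWithinAt_kernel_comp hK hγ
    (fun y' hy' => mapsTo_omegaPlus_rescale b (show (y', s) ∈ _ from ⟨hy', hs⟩)) hy
  rw [one_smul] at h
  exact h

theorem integral_rescaled_kernel_add_smul_kernelDerivT (hb : 0 < b)
    (hK : ContDiffOn ℝ 1 (fun z : ℝ × ℝ => K z.1 z.2) (OmegaPlus b)) {x : ℝ} (hx : x ∈ Icc 0 b) :
    ∫ s in (-1)..1, (K x (x * s) + x • s • kernelDerivT b K (x, x * s)) = K x x + K x (-x) := by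
  have hk : ContinuousOn (fun r => K x (x * r)) (Icc (-1) 1) :=
    hK.continuousOn.comp_omegaPlus_rescale_slice hx
  have he : ContinuousOn (fun r => r • kernelDerivT b K (x, x * r)) (Icc (-1) 1) :=
    continuousOn_id.smul ((continuousOn_kernelDerivT hb hK).comp_omegaPlus_rescale_slice hx)
  have hkt : ∀ s ∈ Icc (-1 : ℝ) 1, HasDerivWithinAt (fun r => K x (x * r))
      (x • kernelDerivT b K (x, x * s)) (Icc (-1) 1) s := by
    intro s hs
    have hγ : HasDerivWithinAt (fun r : ℝ => (x, x * r)) ((0 : ℝ), x) (Icc (-1) 1) s :=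
      (hasDerivWithinAt_const s _ x).prodMk
        (by simpa using ((hasDerivAt_id' s).const_mul x).hasDerivWithinAt)
    have h := hasDerivWithinAt_kernel_comp hK hγ
      (fun r hr => mapsTo_omegaPlus_rescale b (show (x, r) ∈ _ from ⟨hx, hr⟩)) hs
    rw [zero_smul, zero_add] at h
    exact h
  rw [integral_eq_sub_of_hasDerivWithinAt_Icc (f := fun s => s • K x (x * s))
    (f' := fun s => K x (x * s) + x • s • kernelDerivT b K (x, x * s)) (by norm_num)
    (fun s hs => ?_) (hk.add (he.const_smul x))]
  · simp
  · exact ((hasDerivAt_id' s).hasDerivWithinAt.smul (hkt s hs)).congr_deriv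
      (by rw [one_smul, add_comm, smul_comm])

theorem hasDerivWithinAt_integral_kernel (hb : 0 < b)
    (hK : ContDiffOn ℝ 1 (fun z : ℝ × ℝ => K z.1 z.2) (OmegaPlus b)) {x : ℝ} (hx : x ∈ Icc 0 b) :
    HasDerivWithinAt (fun y => ∫ t in (-y)..y, K y t)
      (K x x + K x (-x) + ∫ t in (-x)..x, kernelDerivX b K (x, t)) (Icc 0 b) x := by
  have hk : ContinuousOn (fun r => K x (x * r)) (Icc (-1) 1) :=
    hK.continuousOn.comp_omegaPlus_rescale_slice hx
  have hd : ContinuousOn (fun r => kernelDerivX b K (x, x * r)) (Icc (-1) 1) :=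
    (continuousOn_kernelDerivX hb hK).comp_omegaPlus_rescale_slice hx
  have he : ContinuousOn (fun r => r • kernelDerivT b K (x, x * r)) (Icc (-1) 1) :=
    continuousOn_id.smul ((continuousOn_kernelDerivT hb hK).comp_omegaPlus_rescale_slice hx)
  rw [show (fun y => ∫ t in (-y)..y, K y t) = fun y => y • ∫ s in (-1)..1, K y (y * s) from
    funext fun y => integral_neg_self_eq_smul_integral_comp_mul (K y) y]
  refine ((hasDerivAt_id' x).hasDerivWithinAt.smul
    (hasDerivWithinAt_integral_rescaled hb hK hx)).congr_deriv ?_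
  rw [← integral_rescaled_kernel_add_smul_kernelDerivT hb hK hx,
    integral_neg_self_eq_smul_integral_comp_mul (fun t => kernelDerivX b K (x, t)),
    integral_add (f := fun s => K x (x * s)) (g := fun s => x • s • kernelDerivT b K (x, x * s))
      (hk.intervalIntegrable_of_Icc (by norm_num))
      ((he.intervalIntegrable_of_Icc (by norm_num)).smul x),
    integral_add (hd.intervalIntegrable_of_Icc (by norm_num))
      (he.intervalIntegrable_of_Icc (by norm_num)),
    intervalIntegral.integral_smul]
  module

theorem integral_kernelDerivT (hb : 0 < b)
    (hK : ContDiffOn ℝ 1 (fun z : ℝ × ℝ => K z.1 z.2) (OmegaPlus b)) {x : ℝ} (hx : x ∈ Icc 0 b) :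
    ∫ t in (-x)..x, kernelDerivT b K (x, t) = K x x - K x (-x) := by
  refine integral_eq_sub_of_hasDerivWithinAt_Icc (neg_le_self hx.1) (fun t ht => ?_)
    ((continuousOn_kernelDerivT hb hK).comp_omegaPlus_slice hx)
  have hγ : HasDerivWithinAt (fun t : ℝ => (x, t)) ((0 : ℝ), (1 : ℝ)) (Icc (-x) x) t :=
    (hasDerivWithinAt_const t _ x).prodMk (hasDerivAt_id' t).hasDerivWithinAt
  have h := hasDerivWithinAt_kernel_comp hK hγ (mapsTo_omegaPlus_slice hx) ht
  rw [zero_smul, zero_add, one_smul] at h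
  exact h

theorem dirac_eq_integral_kernel (hb : 0 < b) {Q : ℝ → M2} (hQ : ContinuousOn Q (Icc 0 b))
    (hK : ContDiffOn ℝ 1 (fun z : ℝ × ℝ => K z.1 z.2) (OmegaPlus b))
    (hker : IsTransKernel b Q K) {x : ℝ} (hx : x ∈ Icc 0 b) :
    Bmat * (K x x + K x (-x) + ∫ t in (-x)..x, kernelDerivX b K (x, t)) +
      Q x * (1 + ∫ t in (-x)..x, K x t) = 0 := by
  obtain ⟨hpde, hdiag, hantidiag⟩ := hker
  have hIcc : uIcc (-x) x = Icc (-x) x := uIcc_of_le (neg_le_self hx.1)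
  have hk : ContinuousOn (fun t => K x t) (uIcc (-x) x) :=
    hIcc ▸ hK.continuousOn.comp_omegaPlus_slice hx
  have hd : ContinuousOn (fun t => kernelDerivX b K (x, t)) (uIcc (-x) x) :=
    hIcc ▸ (continuousOn_kernelDerivX hb hK).comp_omegaPlus_slice hx
  have he : ContinuousOn (fun t => kernelDerivT b K (x, t)) (uIcc (-x) x) :=
    hIcc ▸ (continuousOn_kernelDerivT hb hK).comp_omegaPlus_slice hx
  have hint : Bmat * (∫ t in (-x)..x, kernelDerivX b K (x, t)) + Q x * ∫ t in (-x)..x, K x t =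
      -((K x x - K x (-x)) * Bmat) := by
    calc Bmat * (∫ t in (-x)..x, kernelDerivX b K (x, t)) + Q x * ∫ t in (-x)..x, K x t
        = ∫ t in (-x)..x, (Bmat * kernelDerivX b K (x, t) + Q x * K x t) := by
          rw [← intervalIntegral_mul_left_M2 _ hd, ← intervalIntegral_mul_left_M2 _ hk,
            integral_add (f := fun t => Bmat * kernelDerivX b K (x, t)) (g := fun t => Q x * K x t)
              ((continuousOn_const.mul hd).intervalIntegrable)
              ((continuousOn_const.mul hk).intervalIntegrable)]
      _ = ∫ t in (-x)..x, -(kernelDerivT b K (x, t) * Bmat) := by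
          refine integral_congr fun t ht => ?_
          have h := kernel_pde_of_mem_omegaPlus hb hQ hK hpde
            (mapsTo_omegaPlus_slice hx (hIcc ▸ ht))
          rw [← sub_eq_zero] at h ⊢
          rw [← h]
          abel
      _ = -((K x x - K x (-x)) * Bmat) := by
          rw [intervalIntegral.integral_neg, intervalIntegral_mul_right_M2 _ he,
            integral_kernelDerivT hb hK hx]
  have hregroup : ∀ A C I J : M2, Bmat * (A + C + I) + Q x * (1 + J) =
      (Bmat * A - A * Bmat + Q x) + (Bmat * C + C * Bmat) + (Bmat * I + Q x * J + (A - C) * Bmat) :=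
    fun _ _ _ _ => by noncomm_ring
  rw [hregroup, hdiag x hx, hantidiag x hx, hint]
  abel

end TransmutationKernel

theorem legendreP_zero : legendreP 0 = 1 := by
  simp [legendreP]

theorem two_smul_Kcoef_zero (K : ℝ → ℝ → M2) (x : ℝ) :
    (2 : ℝ) • Kcoef K 0 x = ∫ t in (-x)..x, K x t := by
  simp [Kcoef, legendreP_zero, smul_smul]

/-- `V(x) = I + ∫_{-x}^x K(x,t) dt` solves `BV' + QV = 0`, `V(0) = I`;
equivalently `U(0,x) = I + 2K₀(x)`. -/
theorem statement4 (b : ℝ) (hb : 0 < b) (p q : ℝ → ℂ)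
    (hQ : ContDiffOn ℝ 1 (diracPot p q) (Set.Icc 0 b))
    (K : ℝ → ℝ → M2)
    (hK : ContDiffOn ℝ 1 (fun z : ℝ × ℝ => K z.1 z.2) (OmegaPlus b))
    (hker : IsTransKernel b (diracPot p q) K)
    (V : ℝ → M2) (hV : ∀ x, V x = 1 + ∫ t in (-x)..x, K x t) :
    V 0 = 1 ∧
    (∃ V' : ℝ → M2, ∀ x ∈ Set.Icc 0 b,
      HasDerivWithinAt V (V' x) (Set.Icc 0 b) x ∧
      Bmat * V' x + diracPot p q x * V x = 0) ∧
    (∀ x ∈ Set.Icc 0 b, V x = 1 + (2 : ℝ) • Kcoef K 0 x) := by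
  obtain rfl : V = fun x => 1 + ∫ t in (-x)..x, K x t := funext hV
  refine ⟨by simp, ⟨fun x => K x x + K x (-x) + ∫ t in (-x)..x, kernelDerivX b K (x, t),
    fun x hx => ⟨(hasDerivWithinAt_integral_kernel hb hK hx).const_add 1,
      dirac_eq_integral_kernel hb hQ.continuousOn hK hker hx⟩⟩,
    fun x _ => by rw [two_smul_Kcoef_zero]⟩
end
end

section
/- Let Q be a Dirac potential on [0,b] with continuous entries, U(0,·) the matrix solution of B·U′(0,x) + Q(x)·U(0,x) = 0 with U(0,0) = I, and S the associated integral operator. Let h : [0,b] → ℂ and H : [0,b] → M₂ be continuously differentiable. Then for all x ∈ [0,b]: S[ t ↦ h(t)·(B·H′(t) + Q(t)·H(t)) ](x) = h(x)·H(x) − h(0)·U(0,x)·H(0) − S[ t ↦ h′(t)·B·H(t) ](x). In particular, if h(0) = 0 or H(0) = 0, then S[ t ↦ h(t)·(B·H′(t) + Q(t)·H(t)) ](x) = h(x)·H(x) − S[ t ↦ h′(t)·B·H(t) ](x). -/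
noncomputable section

open MeasureTheory Set Filter Topology Polynomial intervalIntegral

attribute [local instance] Matrix.normedAddCommGroup Matrix.normedSpace

/-
`Bᵀ Aᵀ B` is the adjugate of the `2 × 2` matrix `A`. For a symmetric potential `Q`, along the
solution `U` of `B U' + Q U = 0` it satisfies `(Bᵀ Uᵀ B)' = Bᵀ Uᵀ Q`, so `(Bᵀ Uᵀ B) U` is constant,
equal to `1`: thus `U⁻¹ = Bᵀ Uᵀ B` and `(U⁻¹ G)' = U⁻¹ Bᵀ (B G' + Q G)` for every `C¹` matrix
function `G`. Integrating, `S[B G' + Q G](x) = G(x) - U(x) G(0)`. The theorem is this identity for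
`G = h H`, combined with the Leibniz rule `B (h H)' + Q (h H) = h (B H' + Q H) + h' B H`.
-/

open scoped Matrix

lemma Bmat_mul_Bmat : Bmat * Bmat = -1 := by
  ext i j; fin_cases i <;> fin_cases j <;> simp [Bmat]

lemma Bmat_transpose : Bmatᵀ = -Bmat := by
  ext i j; fin_cases i <;> fin_cases j <;> simp [Bmat]

lemma Bmat_transpose_mul_Bmat : Bmatᵀ * Bmat = 1 := by
  rw [Bmat_transpose, neg_mul, Bmat_mul_Bmat, neg_neg]

lemma Bmat_mul_Bmat_transpose : Bmat * Bmatᵀ = 1 := by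
  rw [Bmat_transpose, mul_neg, Bmat_mul_Bmat, neg_neg]

lemma Bmat_transpose_mul_Bmat_mul (A : M2) : Bmatᵀ * (Bmat * A) = A := by
  rw [← mul_assoc, Bmat_transpose_mul_Bmat, one_mul]

lemma diracPot_transpose (p q : ℝ → ℂ) (x : ℝ) : (diracPot p q x)ᵀ = diracPot p q x := by
  ext i j; fin_cases i <;> fin_cases j <;> simp [diracPot]

lemma dirac_smul (Q A A' : M2) (c c' : ℂ) :
    Bmat * (c • A' + c' • A) + Q * (c • A) = c • (Bmat * A' + Q * A) + c' • (Bmat * A) := by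
  simp only [mul_add, mul_smul_comm, smul_add]
  abel

/-- `M2` carries no normed-ring instance, but the `L∞` operator norm provides one with the same
topology, which is all `HasDerivWithinAt` depends on. -/
lemma HasDerivWithinAt.matrix_mul {f g : ℝ → M2} {f' g' : M2} {s : Set ℝ} {x : ℝ}
    (hf : HasDerivWithinAt f f' s x) (hg : HasDerivWithinAt g g' s x) :
    HasDerivWithinAt (fun t => f t * g t) (f' * g x + f x * g') s x :=
  letI : NormedRing M2 := Matrix.linftyOpNormedRing
  letI : NormedAlgebra ℝ M2 := Matrix.linftyOpNormedAlgebra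
  hf.mul hg

def bAdj : M2 →L[ℝ] M2 := LinearMap.toContinuousLinearMap
  { toFun := fun A => Bmatᵀ * Aᵀ * Bmat
    map_add' := fun A A' => by simp only [Matrix.transpose_add, mul_add, add_mul]
    map_smul' := fun r A => by simp [Matrix.transpose_smul] }

lemma bAdj_apply (A : M2) : bAdj A = Bmatᵀ * Aᵀ * Bmat := rfl

lemma bAdj_one : bAdj 1 = 1 := by
  rw [bAdj_apply, Matrix.transpose_one, mul_one, Bmat_transpose_mul_Bmat]

lemma bAdj_mul_Bmat_transpose (A : M2) : bAdj A * Bmatᵀ = Bmatᵀ * Aᵀ := by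
  rw [bAdj_apply, mul_assoc, Bmat_mul_Bmat_transpose, mul_one]

lemma bAdj_eq_of_dirac {Q A A' : M2} (hQ : Qᵀ = Q) (hA : Bmat * A' + Q * A = 0) :
    bAdj A' = bAdj A * Bmatᵀ * Q := by
  have hA' : A' = -(Bmatᵀ * (Q * A)) := by
    rw [← mul_neg, ← eq_neg_of_add_eq_zero_left hA, Bmat_transpose_mul_Bmat_mul]
  rw [bAdj_mul_Bmat_transpose, bAdj_apply, hA']
  simp only [Matrix.transpose_mul, hQ, Bmat_transpose, neg_neg, mul_neg, neg_mul, mul_assoc,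
    Bmat_mul_Bmat, mul_one]

lemma HasDerivWithinAt.bAdj {f : ℝ → M2} {f' : M2} {s : Set ℝ} {x : ℝ}
    (hf : HasDerivWithinAt f f' s x) : HasDerivWithinAt (fun t => bAdj (f t)) (bAdj f') s x :=
  _root_.bAdj.hasFDerivAt.comp_hasDerivWithinAt x hf

lemma Sop_sub {U F G : ℝ → M2} {x : ℝ} (hU : ContinuousOn (fun t => (U t)⁻¹) (uIcc 0 x))
    (hF : ContinuousOn F (uIcc 0 x)) (hG : ContinuousOn G (uIcc 0 x)) :
    Sop U (fun t => F t - G t) x = Sop U F x - Sop U G x := by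
  have hUB : ContinuousOn (fun t => (U t)⁻¹ * Bmatᵀ) (uIcc 0 x) := hU.mul continuousOn_const
  simp only [Sop, mul_sub]
  rw [← mul_sub]
  congr 1
  exact intervalIntegral.integral_sub ((hUB.mul hF).intervalIntegrable (μ := volume))
    ((hUB.mul hG).intervalIntegrable (μ := volume))

structure IsDiracFundamentalSolution (Q U U' : ℝ → M2) (b : ℝ) : Prop where
  hasDerivWithinAt : ∀ x ∈ Icc 0 b, HasDerivWithinAt U (U' x) (Icc 0 b) x
  dirac_eq : ∀ x ∈ Icc 0 b, Bmat * U' x + Q x * U x = 0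
  map_zero : U 0 = 1

namespace IsDiracFundamentalSolution

variable {Q U U' : ℝ → M2} {b : ℝ}

lemma continuousOn (hU : IsDiracFundamentalSolution Q U U' b) : ContinuousOn U (Icc 0 b) :=
  fun x hx => (hU.hasDerivWithinAt x hx).continuousWithinAt

lemma bAdj_mul_self (hQ : ∀ t, (Q t)ᵀ = Q t) (hU : IsDiracFundamentalSolution Q U U' b) :
    ∀ t ∈ Icc 0 b, bAdj (U t) * U t = 1 := by
  have hderiv : ∀ t ∈ Icc 0 b,
      HasDerivWithinAt (fun s => bAdj (U s) * U s) 0 (Icc 0 b) t := by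
    intro t ht
    convert (hU.hasDerivWithinAt t ht).bAdj.matrix_mul (hU.hasDerivWithinAt t ht) using 1
    rw [bAdj_eq_of_dirac (hQ t) (hU.dirac_eq t ht), ← mul_zero (bAdj (U t) * Bmatᵀ),
      ← hU.dirac_eq t ht]
    simp only [mul_add, mul_assoc, Bmat_transpose_mul_Bmat_mul]
    exact add_comm _ _
  have hconst := constant_of_has_deriv_right_zero
    (fun t ht => (hderiv t ht).continuousWithinAt)
    (fun t ht => (hderiv t (Ico_subset_Icc_self ht)).mono_of_mem_nhdsWithin
      (Icc_mem_nhdsGE_of_mem ht))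
  intro t ht
  rw [hconst t ht, hU.map_zero, bAdj_one, one_mul]

lemma inv_eq_bAdj (hQ : ∀ t, (Q t)ᵀ = Q t) (hU : IsDiracFundamentalSolution Q U U' b) {t : ℝ}
    (ht : t ∈ Icc 0 b) : (U t)⁻¹ = bAdj (U t) :=
  Matrix.inv_eq_left_inv (hU.bAdj_mul_self hQ t ht)

lemma mul_inv_self (hQ : ∀ t, (Q t)ᵀ = Q t) (hU : IsDiracFundamentalSolution Q U U' b) {t : ℝ}
    (ht : t ∈ Icc 0 b) : U t * (U t)⁻¹ = 1 := by
  rw [hU.inv_eq_bAdj hQ ht]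
  exact mul_eq_one_comm.mp (hU.bAdj_mul_self hQ t ht)

lemma continuousOn_inv (hQ : ∀ t, (Q t)ᵀ = Q t) (hU : IsDiracFundamentalSolution Q U U' b) :
    ContinuousOn (fun t => (U t)⁻¹) (Icc 0 b) :=
  (bAdj.continuous.comp_continuousOn hU.continuousOn).congr fun _ ht => hU.inv_eq_bAdj hQ ht

lemma hasDerivWithinAt_inv_mul (hQ : ∀ t, (Q t)ᵀ = Q t)
    (hU : IsDiracFundamentalSolution Q U U' b) {G G' : ℝ → M2} {x : ℝ} (hx : x ∈ Icc 0 b)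
    (hG : HasDerivWithinAt G (G' x) (Icc 0 b) x) :
    HasDerivWithinAt (fun t => (U t)⁻¹ * G t)
      ((U x)⁻¹ * Bmatᵀ * (Bmat * G' x + Q x * G x)) (Icc 0 b) x := by
  refine (((hU.hasDerivWithinAt x hx).bAdj.matrix_mul hG).congr_of_mem
    (fun t ht => by rw [hU.inv_eq_bAdj hQ ht]) hx).congr_deriv ?_
  rw [bAdj_eq_of_dirac (hQ x) (hU.dirac_eq x hx), hU.inv_eq_bAdj hQ hx]
  simp only [mul_add, mul_assoc, Bmat_transpose_mul_Bmat_mul]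
  exact add_comm _ _

lemma Sop_dirac (hQc : ContinuousOn Q (Icc 0 b)) (hQ : ∀ t, (Q t)ᵀ = Q t)
    (hU : IsDiracFundamentalSolution Q U U' b) {G G' : ℝ → M2}
    (hG : ∀ x ∈ Icc 0 b, HasDerivWithinAt G (G' x) (Icc 0 b) x)
    (hG'c : ContinuousOn G' (Icc 0 b)) {x : ℝ} (hx : x ∈ Icc 0 b) :
    Sop U (fun t => Bmat * G' t + Q t * G t) x = G x - U x * G 0 := by
  have hsub : Icc 0 x ⊆ Icc 0 b := Icc_subset_Icc_right hx.2
  have hGc : ContinuousOn G (Icc 0 b) := fun t ht => (hG t ht).continuousWithinAt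
  have hUinv := hU.continuousOn_inv hQ
  have hFTC : ∫ t in (0 : ℝ)..x, (U t)⁻¹ * Bmatᵀ * (Bmat * G' t + Q t * G t)
      = (U x)⁻¹ * G x - (U 0)⁻¹ * G 0 := by
    refine integral_eq_sub_of_hasDerivAt_of_le hx.1 ((hUinv.mul hGc).mono hsub)
      (fun t ht => ?_) ?_
    · exact (hU.hasDerivWithinAt_inv_mul hQ (hsub (Ioo_subset_Icc_self ht))
        (hG t (hsub (Ioo_subset_Icc_self ht)))).hasDerivAt
        (Icc_mem_nhds ht.1 (ht.2.trans_le hx.2))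
    · exact (((hUinv.mul continuousOn_const).mul ((continuousOn_const.mul hG'c).add
        (hQc.mul hGc))).mono hsub).intervalIntegrable_of_Icc hx.1
  rw [Sop, hFTC, hU.map_zero, inv_one, one_mul, mul_sub, ← mul_assoc, hU.mul_inv_self hQ hx,
    one_mul]

lemma Sop_smul_dirac (hQc : ContinuousOn Q (Icc 0 b)) (hQ : ∀ t, (Q t)ᵀ = Q t)
    (hU : IsDiracFundamentalSolution Q U U' b) {h h' : ℝ → ℂ} {H H' : ℝ → M2}
    (hhd : ∀ x ∈ Icc 0 b, HasDerivWithinAt h (h' x) (Icc 0 b) x)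
    (hh'c : ContinuousOn h' (Icc 0 b))
    (hHd : ∀ x ∈ Icc 0 b, HasDerivWithinAt H (H' x) (Icc 0 b) x)
    (hH'c : ContinuousOn H' (Icc 0 b)) {x : ℝ} (hx : x ∈ Icc 0 b) :
    Sop U (fun t => h t • (Bmat * H' t + Q t * H t)) x
      = h x • H x - h 0 • (U x * H 0) - Sop U (fun t => h' t • (Bmat * H t)) x := by
  have hhc : ContinuousOn h (Icc 0 b) := fun t ht => (hhd t ht).continuousWithinAt
  have hHc : ContinuousOn H (Icc 0 b) := fun t ht => (hHd t ht).continuousWithinAt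
  have hsub : uIcc 0 x ⊆ Icc 0 b := by rw [uIcc_of_le hx.1]; exact Icc_subset_Icc_right hx.2
  have hhH' : ContinuousOn (fun t => h t • H' t + h' t • H t) (Icc 0 b) :=
    (hhc.smul hH'c).add (hh'c.smul hHc)
  have hsplit : (fun t => h t • (Bmat * H' t + Q t * H t)) = fun t =>
      (Bmat * (h t • H' t + h' t • H t) + Q t * (h t • H t)) - h' t • (Bmat * H t) :=
    funext fun t => eq_sub_of_add_eq (dirac_smul ..).symm
  rw [hsplit, Sop_sub (hU.continuousOn_inv hQ |>.mono hsub),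
    hU.Sop_dirac hQc hQ (G := fun t => h t • H t) (fun t ht => (hhd t ht).smul (hHd t ht))
      hhH' hx, mul_smul_comm]
  · exact ((continuousOn_const.mul hhH').add (hQc.mul (hhc.smul hHc))).mono hsub
  · exact (hh'c.smul (continuousOn_const.mul hHc)).mono hsub

end IsDiracFundamentalSolution

theorem statement10_general (b : ℝ) (p q : ℝ → ℂ)
    (hQ : ContinuousOn (diracPot p q) (Set.Icc 0 b))
    (U U' : ℝ → M2) (hU0 : U 0 = 1)
    (hUd : ∀ x ∈ Set.Icc 0 b, HasDerivWithinAt U (U' x) (Set.Icc 0 b) x)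
    (hUode : ∀ x ∈ Set.Icc 0 b, Bmat * U' x + diracPot p q x * U x = 0)
    (h h' : ℝ → ℂ)
    (hhd : ∀ x ∈ Set.Icc 0 b, HasDerivWithinAt h (h' x) (Set.Icc 0 b) x)
    (hh'c : ContinuousOn h' (Set.Icc 0 b))
    (H H' : ℝ → M2)
    (hHd : ∀ x ∈ Set.Icc 0 b, HasDerivWithinAt H (H' x) (Set.Icc 0 b) x)
    (hH'c : ContinuousOn H' (Set.Icc 0 b)) :
    (∀ x ∈ Set.Icc 0 b,
      Sop U (fun t => h t • (Bmat * H' t + diracPot p q t * H t)) x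
        = h x • H x - h 0 • (U x * H 0)
          - Sop U (fun t => h' t • (Bmat * H t)) x) ∧
    ((h 0 = 0 ∨ H 0 = 0) → ∀ x ∈ Set.Icc 0 b,
      Sop U (fun t => h t • (Bmat * H' t + diracPot p q t * H t)) x
        = h x • H x - Sop U (fun t => h' t • (Bmat * H t)) x) := by
  have hU : IsDiracFundamentalSolution (diracPot p q) U U' b := ⟨hUd, hUode, hU0⟩
  have main := fun x (hx : x ∈ Icc 0 b) =>
    hU.Sop_smul_dirac hQ (diracPot_transpose p q) hhd hh'c hHd hH'c hx
  refine ⟨main, fun h0 x hx => ?_⟩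
  rw [main x hx]
  rcases h0 with h0 | h0 <;> simp [h0]

/-- the integration-by-parts identity for `S[h·(A_Q H)]`. -/
theorem statement10 (b : ℝ) (hb : 0 < b) (p q : ℝ → ℂ)
    (hQ : ContinuousOn (diracPot p q) (Set.Icc 0 b))
    (U U' : ℝ → M2) (hU0 : U 0 = 1)
    (hUd : ∀ x ∈ Set.Icc 0 b, HasDerivWithinAt U (U' x) (Set.Icc 0 b) x)
    (hUode : ∀ x ∈ Set.Icc 0 b, Bmat * U' x + diracPot p q x * U x = 0)
    (h h' : ℝ → ℂ)
    (hhd : ∀ x ∈ Set.Icc 0 b, HasDerivWithinAt h (h' x) (Set.Icc 0 b) x)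
    (hh'c : ContinuousOn h' (Set.Icc 0 b))
    (H H' : ℝ → M2)
    (hHd : ∀ x ∈ Set.Icc 0 b, HasDerivWithinAt H (H' x) (Set.Icc 0 b) x)
    (hH'c : ContinuousOn H' (Set.Icc 0 b)) :
    (∀ x ∈ Set.Icc 0 b,
      Sop U (fun t => h t • (Bmat * H' t + diracPot p q t * H t)) x
        = h x • H x - h 0 • (U x * H 0)
          - Sop U (fun t => h' t • (Bmat * H t)) x) ∧
    ((h 0 = 0 ∨ H 0 = 0) → ∀ x ∈ Set.Icc 0 b,
      Sop U (fun t => h t • (Bmat * H' t + diracPot p q t * H t)) x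
        = h x • H x - Sop U (fun t => h' t • (Bmat * H t)) x) :=
  statement10_general b p q hQ U U' hU0 hUd hUode h h' hhd hh'c H H' hHd hH'c

end
end

section
/- For every λ ∈ ℂ and every t ∈ ℝ, the operator norm of the matrix U₀(λ,t) (as a linear operator on ℂ² with the Euclidean norm) equals e^{|Im λ|·|t|}. -/
noncomputable section

open MeasureTheory Set Filter Topology Polynomial intervalIntegral

attribute [local instance] Matrix.normedAddCommGroup Matrix.normedSpace

/-! In the coordinates `v₀ ± i v₁` the rotation by the complex angle `z` acts diagonally, by the
factors `e^{± i z}` of moduli `e^{∓ Im z}`. Since `‖v₀ + i v₁‖² + ‖v₀ - i v₁‖² = 2 ‖v‖²`, the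
operator norm is the larger modulus `e^{|Im z|}`, attained at one of the eigenvectors `(1, ± i)`. -/

open Complex

theorem ContinuousLinearMap.opNorm_eq_of_bound_of_norm_apply_eq {𝕜 E F : Type*}
    [NontriviallyNormedField 𝕜] [SeminormedAddCommGroup E] [SeminormedAddCommGroup F]
    [NormedSpace 𝕜 E] [NormedSpace 𝕜 F] (f : E →L[𝕜] F) {M : ℝ}
    (h_above : ∀ x, ‖f x‖ ≤ M * ‖x‖) {v : E} (hv : ‖v‖ ≠ 0) (hfv : ‖f v‖ = M * ‖v‖) :
    ‖f‖ = M := by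
  have hv_pos : 0 < ‖v‖ := (norm_nonneg v).lt_of_ne' hv
  have hM : 0 ≤ M := nonneg_of_mul_nonneg_left (hfv ▸ norm_nonneg _) hv_pos
  exact le_antisymm (f.opNorm_le_bound hM h_above)
    (le_of_mul_le_mul_right (hfv ▸ f.le_opNorm v) hv_pos)

theorem Complex.norm_add_I_mul_sq_add_norm_sub_I_mul_sq (x y : ℂ) :
    ‖x + I * y‖ ^ 2 + ‖x - I * y‖ ^ 2 = 2 * (‖x‖ ^ 2 + ‖y‖ ^ 2) := by
  have := parallelogram_law_with_norm ℝ x (I * y)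
  rw [norm_mul, norm_I, one_mul] at this
  linarith

theorem EuclideanSpace.two_mul_norm_sq_fin_two (v : EuclideanSpace ℂ (Fin 2)) :
    2 * ‖v‖ ^ 2 = ‖v 0 + I * v 1‖ ^ 2 + ‖v 0 - I * v 1‖ ^ 2 := by
  rw [norm_add_I_mul_sq_add_norm_sub_I_mul_sq, EuclideanSpace.norm_sq_eq, Fin.sum_univ_two]

def rotationMatrix (z : ℂ) : M2 := !![cos z, -sin z; sin z, cos z]

section rotation

variable (z : ℂ) (v : EuclideanSpace ℂ (Fin 2))

local notation "R" => Matrix.toEuclideanCLM (𝕜 := ℂ) (rotationMatrix z)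

theorem rotationMatrix_apply_add_I_mul :
    (R v) 0 + I * (R v) 1 = exp (z * I) * (v 0 + I * v 1) := by
  rw [← cos_add_sin_I]
  simp only [rotationMatrix, Matrix.ofLp_toEuclideanCLM, Matrix.mulVec, dotProduct,
    Matrix.of_apply, Matrix.cons_val', Matrix.cons_val_fin_one, Matrix.cons_val_zero,
    Fin.sum_univ_two, Matrix.cons_val_one, neg_mul]
  linear_combination -(sin z * v 1) * I_sq

theorem rotationMatrix_apply_sub_I_mul :
    (R v) 0 - I * (R v) 1 = exp (-(z * I)) * (v 0 - I * v 1) := by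
  rw [← neg_mul, ← cos_sub_sin_I]
  simp only [rotationMatrix, Matrix.ofLp_toEuclideanCLM, Matrix.mulVec, dotProduct,
    Matrix.of_apply, Matrix.cons_val', Matrix.cons_val_fin_one, Matrix.cons_val_zero,
    Fin.sum_univ_two, Matrix.cons_val_one, neg_mul]
  linear_combination -(sin z * v 1) * I_sq

theorem two_mul_norm_rotationMatrix_apply_sq :
    2 * ‖R v‖ ^ 2 =
      Real.exp (-z.im) ^ 2 * ‖v 0 + I * v 1‖ ^ 2 + Real.exp z.im ^ 2 * ‖v 0 - I * v 1‖ ^ 2 := by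
  rw [EuclideanSpace.two_mul_norm_sq_fin_two, rotationMatrix_apply_add_I_mul,
    rotationMatrix_apply_sub_I_mul, norm_mul, norm_mul, norm_exp, norm_exp, mul_pow, mul_pow]
  simp

theorem norm_rotationMatrix_apply_le : ‖R v‖ ≤ Real.exp |z.im| * ‖v‖ := by
  have h_sq : 2 * ‖R v‖ ^ 2 ≤ 2 * (Real.exp |z.im| * ‖v‖) ^ 2 := by
    rw [two_mul_norm_rotationMatrix_apply_sq, mul_pow, mul_left_comm,
      EuclideanSpace.two_mul_norm_sq_fin_two, mul_add]
    gcongr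
    · exact neg_le_abs _
    · exact le_abs_self _
  exact le_of_pow_le_pow_left₀ two_ne_zero (by positivity) (le_of_mul_le_mul_left h_sq two_pos)

theorem norm_rotationMatrix_apply_of_add_I_mul_eq_zero (hv : v 0 + I * v 1 = 0) :
    ‖R v‖ = Real.exp z.im * ‖v‖ := by
  have h_sq : 2 * ‖R v‖ ^ 2 = 2 * (Real.exp z.im * ‖v‖) ^ 2 := by
    rw [two_mul_norm_rotationMatrix_apply_sq, mul_pow, mul_left_comm,
      EuclideanSpace.two_mul_norm_sq_fin_two, hv]
    simp
  exact (sq_eq_sq₀ (norm_nonneg _) (by positivity)).1 (mul_left_cancel₀ two_ne_zero h_sq)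

theorem norm_rotationMatrix_apply_of_sub_I_mul_eq_zero (hv : v 0 - I * v 1 = 0) :
    ‖R v‖ = Real.exp (-z.im) * ‖v‖ := by
  have h_sq : 2 * ‖R v‖ ^ 2 = 2 * (Real.exp (-z.im) * ‖v‖) ^ 2 := by
    rw [two_mul_norm_rotationMatrix_apply_sq, mul_pow, mul_left_comm,
      EuclideanSpace.two_mul_norm_sq_fin_two, hv]
    simp
  exact (sq_eq_sq₀ (norm_nonneg _) (by positivity)).1 (mul_left_cancel₀ two_ne_zero h_sq)

end rotation

theorem opNorm_rotationMatrix (z : ℂ) : opNorm (rotationMatrix z) = Real.exp |z.im| := by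
  have h_ne : ∀ a : ℂ, ‖!₂[1, a]‖ ≠ 0 := fun a h => by
    simpa using congrArg (· 0) (norm_eq_zero.1 h)
  refine (Matrix.toEuclideanCLM (𝕜 := ℂ) (rotationMatrix z)).opNorm_eq_of_bound_of_norm_apply_eq
    (norm_rotationMatrix_apply_le z) (h_ne (if 0 ≤ z.im then I else -I)) ?_
  split_ifs with h
  · rw [norm_rotationMatrix_apply_of_add_I_mul_eq_zero _ _ (by simp), abs_of_nonneg h]
  · rw [norm_rotationMatrix_apply_of_sub_I_mul_eq_zero _ _ (by simp), abs_of_neg (not_le.1 h)]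

/-- `|U₀(λ,t)| = e^{|Im λ|·|t|}`. -/
theorem statement12 (lam : ℂ) (t : ℝ) :
    opNorm (U0 lam t) = Real.exp (|lam.im| * |t|) := by
  rw [show U0 lam t = rotationMatrix (lam * t) from rfl, opNorm_rotationMatrix, im_mul_ofReal,
    abs_mul]
end
end

section
/- Let Q be a Dirac potential on [0,b], K an integrable transmutation kernel for Q, N a nonnegative integer, x ∈ (0,b], and suppose ε₂ ≥ 0 is such that ‖K(x,·) − K^N(x,·)‖_{L²(−x,x)} ≤ ε₂. Then: (a) for every λ ∈ ℝ, |U(λ,x) − U^N(λ,x)| ≤ √(2x)·ε₂; (b) for every λ ∈ ℂ with Im λ ≠ 0, |U(λ,x) − U^N(λ,x)| ≤ ε₂·√((e^{2|Im λ|·x} − 1)/|Im λ|). -/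
noncomputable section

open MeasureTheory Set Filter Topology Polynomial intervalIntegral

attribute [local instance] Matrix.normedAddCommGroup Matrix.normedSpace

instance M2.continuousENorm : ContinuousENorm M2 := SeminormedAddGroup.toContinuousENorm

/-!
The difference `U(λ,x) - U^N(λ,x)` is `∫_{-x}^{x} (K - K^N)(x,t) U₀(λ,t) dt`, so by the
Cauchy–Schwarz inequality its norm is at most `ε₂ · ‖U₀(λ,·)‖_{L²(-x,x)}`. As `U₀(λ,t)` is a
rotation by the complex angle `λt`, its operator norm is at most `e^{|Im λ|·|t|}`, and
`∫_{-x}^{x} e^{2|Im λ|·|t|} dt` equals `2x` for real `λ` and `(e^{2|Im λ|x} - 1)/|Im λ|` otherwise.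
-/

theorem enorm_integral_mul_le_eLpNorm_mul_eLpNorm {α A : Type*} [MeasurableSpace α]
    {μ : Measure α} [NormedRing A] [NormedSpace ℝ A] {f g : α → A}
    (hf : AEStronglyMeasurable f μ) (hg : AEStronglyMeasurable g μ) :
    ‖∫ a, f a * g a ∂μ‖ₑ ≤ eLpNorm f 2 μ * eLpNorm g 2 μ :=
  calc ‖∫ a, f a * g a ∂μ‖ₑ ≤ ∫⁻ a, ‖f a * g a‖ₑ ∂μ := enorm_integral_le_lintegral_enorm _
    _ = eLpNorm (fun a => f a * g a) 1 μ := eLpNorm_one_eq_lintegral_enorm.symm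
    _ ≤ eLpNorm f 2 μ * eLpNorm g 2 μ := by
      simpa using eLpNorm_le_eLpNorm_mul_eLpNorm'_of_norm (r := 1) hf hg (· * ·) 1
        (ae_of_all _ fun a => by simpa using norm_mul_le (f a) (g a))

theorem eLpNorm_two_eq_lintegral_sq {α : Type*} [MeasurableSpace α] {μ : Measure α}
    (g : α → ℝ) : eLpNorm g 2 μ = (∫⁻ a, ENNReal.ofReal (g a ^ 2) ∂μ) ^ (1 / 2 : ℝ) := by
  rw [eLpNorm_eq_lintegral_rpow_enorm_toReal (by norm_num) (by norm_num)]
  simp [← ofReal_norm, ← ENNReal.ofReal_pow (abs_nonneg _)]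

theorem eLpNorm_two_le_of_lintegral_sq_le {α : Type*} [MeasurableSpace α] {μ : Measure α}
    {g : α → ℝ} {ε : ℝ} (hε : 0 ≤ ε)
    (hg : ∫⁻ a, ENNReal.ofReal (g a ^ 2) ∂μ ≤ ENNReal.ofReal (ε ^ 2)) :
    eLpNorm g 2 μ ≤ ENNReal.ofReal ε := by
  rw [eLpNorm_two_eq_lintegral_sq]
  calc _ ≤ ENNReal.ofReal (ε ^ 2) ^ (1 / 2 : ℝ) := by gcongr
    _ = ENNReal.ofReal ε := by
      rw [ENNReal.ofReal_rpow_of_nonneg (by positivity) (by norm_num), ← Real.sqrt_eq_rpow,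
        Real.sqrt_sq hε]

theorem eLpNorm_two_eq_sqrt_integral_sq {α : Type*} [MeasurableSpace α] {μ : Measure α}
    {g : α → ℝ} (hg : Integrable (fun a => g a ^ 2) μ) :
    eLpNorm g 2 μ = ENNReal.ofReal √(∫ a, g a ^ 2 ∂μ) := by
  rw [eLpNorm_two_eq_lintegral_sq, ← ofReal_integral_eq_lintegral_ofReal hg
    (ae_of_all _ fun a => sq_nonneg _), ENNReal.ofReal_rpow_of_nonneg
    (integral_nonneg fun a => sq_nonneg _) (by norm_num), Real.sqrt_eq_rpow]

/-- The ambient norm on `M2` is the entrywise sup norm; estimates in `opNorm` are carried out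
in the normed algebra of operators on `ℂ²` instead. -/
def Matrix.toEuclideanCLE {n 𝕜 : Type*} [RCLike 𝕜] [Fintype n] [DecidableEq n] :
    Matrix n n 𝕜 ≃L[𝕜] (EuclideanSpace 𝕜 n →L[𝕜] EuclideanSpace 𝕜 n) :=
  Matrix.toEuclideanCLM.toAlgEquiv.toLinearEquiv.toContinuousLinearEquiv

theorem Matrix.toEuclideanCLE_apply {n 𝕜 : Type*} [RCLike 𝕜] [Fintype n] [DecidableEq n]
    (A : Matrix n n 𝕜) : Matrix.toEuclideanCLE A = Matrix.toEuclideanCLM (n := n) (𝕜 := 𝕜) A :=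
  rfl

theorem Matrix.toEuclideanCLE_mul {n 𝕜 : Type*} [RCLike 𝕜] [Fintype n] [DecidableEq n]
    (A B : Matrix n n 𝕜) :
    Matrix.toEuclideanCLE (A * B) = Matrix.toEuclideanCLE A * Matrix.toEuclideanCLE B := by
  rw [Matrix.toEuclideanCLE_apply, map_mul]; rfl

theorem opNorm_eq_norm_toEuclideanCLE (A : M2) : opNorm A = ‖Matrix.toEuclideanCLE A‖ := rfl


open Complex in
theorem norm_sq_add_norm_sq_eq (u w : ℂ) :
    ‖u‖ ^ 2 + ‖w‖ ^ 2 = (‖u + I * w‖ ^ 2 + ‖u - I * w‖ ^ 2) / 2 := by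
  simp only [Complex.sq_norm, normSq_apply, add_re, add_im, sub_re, sub_im, mul_re, mul_im, I_re,
    I_im]
  ring

open Complex in
/-- In the coordinates `a ± I b` a rotation by the pair `(c, s)` becomes multiplication by
`c ± I s`. -/
theorem norm_sq_rotation_le {c s : ℂ} {M : ℝ}
    (hplus : ‖c + I * s‖ ≤ M) (hminus : ‖c - I * s‖ ≤ M) (a b : ℂ) :
    ‖c * a - s * b‖ ^ 2 + ‖s * a + c * b‖ ^ 2 ≤ M ^ 2 * (‖a‖ ^ 2 + ‖b‖ ^ 2) := by
  have eplus : (c * a - s * b) + I * (s * a + c * b) = (c + I * s) * (a + I * b) := by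
    linear_combination (-(s * b)) * I_sq
  have eminus : (c * a - s * b) - I * (s * a + c * b) = (c - I * s) * (a - I * b) := by
    linear_combination (-(s * b)) * I_sq
  rw [norm_sq_add_norm_sq_eq, eplus, eminus, norm_sq_add_norm_sq_eq a b, norm_mul, norm_mul,
    mul_pow, mul_pow]
  have := pow_le_pow_left₀ (norm_nonneg _) hplus 2
  have := pow_le_pow_left₀ (norm_nonneg _) hminus 2
  nlinarith [sq_nonneg ‖a + I * b‖, sq_nonneg ‖a - I * b‖]

open Complex in
theorem norm_cos_add_I_mul_sin_le (z : ℂ) : ‖cos z + I * sin z‖ ≤ Real.exp |z.im| := by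
  rw [mul_comm I, ← exp_mul_I, norm_exp]
  simpa using neg_le_abs z.im

open Complex in
theorem norm_cos_sub_I_mul_sin_le (z : ℂ) : ‖cos z - I * sin z‖ ≤ Real.exp |z.im| := by
  simpa [cos_neg, sin_neg, sub_eq_add_neg] using norm_cos_add_I_mul_sin_le (-z)

theorem opNorm_U0_le (lam : ℂ) (t : ℝ) : opNorm (U0 lam t) ≤ Real.exp (|lam.im| * |t|) := by
  have him : |(lam * t).im| = |lam.im| * |t| := by simp [abs_mul]
  refine ContinuousLinearMap.opNorm_le_bound _ (Real.exp_pos _).le fun v => ?_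
  refine le_of_pow_le_pow_left₀ two_ne_zero (by positivity) ?_
  rw [mul_pow, EuclideanSpace.norm_sq_eq, EuclideanSpace.norm_sq_eq]
  simpa [U0, Matrix.mulVec, dotProduct, Fin.sum_univ_two, him, ← sub_eq_add_neg]
    using norm_sq_rotation_le (him ▸ norm_cos_add_I_mul_sin_le (lam * t))
      (him ▸ norm_cos_sub_I_mul_sin_le (lam * t)) (v 0) (v 1)

theorem MeasureTheory.IntegrableOn.matrix_mul_continuousOn {X : Type*} [TopologicalSpace X]
    [MeasurableSpace X] [OpensMeasurableSpace X] [T2Space X] {μ : Measure X} {s : Set X}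
    {f g : X → M2}
    (hf : IntegrableOn f s μ) (hg : ContinuousOn g s) (hs : IsCompact s) :
    IntegrableOn (fun x => f x * g x) s μ := by
  let Φ : M2 ≃L[ℂ] _ := Matrix.toEuclideanCLE
  have hΦ := IntegrableOn.mul_continuousOn (Φ.integrable_comp_iff.2 hf)
    (Φ.continuous.comp_continuousOn hg) hs
  refine Φ.integrable_comp_iff.1 (hΦ.congr (ae_of_all _ fun x => ?_))
  exact (Matrix.toEuclideanCLE_mul (f x) (g x)).symm

theorem continuous_U0 (lam : ℂ) : Continuous (U0 lam) := by
  refine continuous_matrix fun i j => ?_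
  fin_cases i <;> fin_cases j <;> simp only [U0] <;> fun_prop

theorem continuous_KN (K : ℝ → ℝ → M2) (N : ℕ) (x : ℝ) : Continuous (KN K N x) := by
  unfold KN
  fun_prop

theorem Umat_sub_UmatN {K : ℝ → ℝ → M2} {x : ℝ} (hx : 0 ≤ x)
    (hK : IntegrableOn (K x) (Icc (-x) x)) (N : ℕ) (lam : ℂ) :
    Umat K lam x - UmatN K N lam x = ∫ t in -x..x, (K x t - KN K N x t) * U0 lam t := by
  have hxx : -x ≤ x := by linarith
  have hKU : IntegrableOn (fun t => K x t * U0 lam t) (Ioc (-x) x) :=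
    (hK.matrix_mul_continuousOn (continuous_U0 lam).continuousOn isCompact_Icc).mono_set
      Ioc_subset_Icc_self
  have hKNU : IntegrableOn (fun t => KN K N x t * U0 lam t) (Ioc (-x) x) :=
    ((continuous_KN K N x).mul (continuous_U0 lam)).integrableOn_Ioc
  simp only [Umat, UmatN, add_sub_add_left_eq_sub, integral_of_le hxx, ← integral_sub hKU hKNU,
    sub_mul]

theorem ofReal_opNorm_integral_mul_le {α : Type*} [MeasurableSpace α] {μ : Measure α}
    {F G : α → M2} (hF : AEStronglyMeasurable F μ) (hG : AEStronglyMeasurable G μ) :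
    ENNReal.ofReal (opNorm (∫ a, F a * G a ∂μ)) ≤
      eLpNorm (fun a => opNorm (F a)) 2 μ * eLpNorm (fun a => opNorm (G a)) 2 μ := by
  have hΦ := (Matrix.toEuclideanCLE (n := Fin 2) (𝕜 := ℂ)).continuous
  simp only [opNorm_eq_norm_toEuclideanCLE, ofReal_norm, eLpNorm_norm]
  calc _ = ‖∫ a, Matrix.toEuclideanCLE (F a) * Matrix.toEuclideanCLE (G a) ∂μ‖ₑ := by
        simp only [← Matrix.toEuclideanCLE_mul]
        exact congrArg _ (ContinuousLinearEquiv.integral_comp_comm _ _).symm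
    _ ≤ _ := enorm_integral_mul_le_eLpNorm_mul_eLpNorm (hΦ.comp_aestronglyMeasurable hF)
        (hΦ.comp_aestronglyMeasurable hG)

theorem opNorm_integral_mul_U0_le {a b ε : ℝ} (hab : a ≤ b) {F : ℝ → M2}
    (hF : AEStronglyMeasurable F (volume.restrict (Ioc a b))) (hε : 0 ≤ ε)
    (hFε : ∫⁻ t in Ioc a b, ENNReal.ofReal (opNorm (F t) ^ 2) ≤ ENNReal.ofReal (ε ^ 2))
    (lam : ℂ) :
    opNorm (∫ t in a..b, F t * U0 lam t) ≤
      ε * √(∫ t in a..b, Real.exp (|lam.im| * |t|) ^ 2) := by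
  have hexp : Continuous fun t : ℝ => Real.exp (|lam.im| * |t|) := by fun_prop
  rw [← ENNReal.ofReal_le_ofReal_iff (by positivity), ENNReal.ofReal_mul hε,
    integral_of_le hab, integral_of_le hab]
  refine (ofReal_opNorm_integral_mul_le hF
    (continuous_U0 lam).integrableOn_Ioc.aestronglyMeasurable).trans ?_
  gcongr
  · exact eLpNorm_two_le_of_lintegral_sq_le hε hFε
  · rw [← eLpNorm_two_eq_sqrt_integral_sq (hexp.pow 2).integrableOn_Ioc]
    refine eLpNorm_mono_real fun t => ?_
    exact (Real.norm_of_nonneg (norm_nonneg _)).trans_le (opNorm_U0_le lam t)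

theorem integral_sq_exp_mul_abs {c x : ℝ} (hc : c ≠ 0) (hx : 0 ≤ x) :
    ∫ t in -x..x, Real.exp (c * |t|) ^ 2 = (Real.exp (2 * c * x) - 1) / c := by
  have hcont : Continuous fun t : ℝ => Real.exp (c * |t|) ^ 2 := by fun_prop
  have hneg : ∫ t in -x..0, Real.exp (c * |t|) ^ 2 = ∫ t in 0..x, Real.exp (c * |t|) ^ 2 := by
    simpa using (integral_comp_neg (a := 0) (b := x) fun t => Real.exp (c * |t|) ^ 2).symm
  have hpos : ∫ t in 0..x, Real.exp (c * |t|) ^ 2 = ∫ t in 0..x, Real.exp (2 * c * t) := by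
    refine integral_congr fun t ht => ?_
    rw [uIcc_of_le hx] at ht
    simp only [abs_of_nonneg ht.1, ← Real.exp_nat_mul]
    ring_nf
  rw [← integral_add_adjacent_intervals (hcont.intervalIntegrable _ 0)
    (hcont.intervalIntegrable 0 x), hneg, hpos, integral_comp_mul_left (fun u => Real.exp u)
    (by positivity), integral_exp, mul_zero, Real.exp_zero, smul_eq_mul]
  field_simp
  ring

theorem statement18_general (b : ℝ) (K : ℝ → ℝ → M2)
    (hKint : ∀ y ∈ Set.Ioc 0 b, IntegrableOn (fun t => K y t) (Set.Icc (-y) y))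
    (N : ℕ) (x : ℝ) (hx : x ∈ Set.Ioc 0 b) (ε₂ : ℝ) (hε : 0 ≤ ε₂)
    (hbound : (∫⁻ t in Set.Ioc (-x) x,
        ENNReal.ofReal (opNorm (K x t - KN K N x t) ^ 2)) ≤ ENNReal.ofReal (ε₂ ^ 2)) :
    (∀ lam : ℝ, opNorm (Umat K (lam : ℂ) x - UmatN K N (lam : ℂ) x)
        ≤ Real.sqrt (2 * x) * ε₂) ∧
    (∀ lam : ℂ, lam.im ≠ 0 → opNorm (Umat K lam x - UmatN K N lam x)
        ≤ ε₂ * Real.sqrt ((Real.exp (2 * |lam.im| * x) - 1) / |lam.im|)) := by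
  have hK : IntegrableOn (K x) (Icc (-x) x) := hKint x hx
  have hF : AEStronglyMeasurable (fun t => K x t - KN K N x t) (volume.restrict (Ioc (-x) x)) :=
    ((hK.mono_set Ioc_subset_Icc_self).sub
      (continuous_KN K N x).integrableOn_Ioc).aestronglyMeasurable
  have key (lam : ℂ) : opNorm (Umat K lam x - UmatN K N lam x) ≤
      ε₂ * √(∫ t in -x..x, Real.exp (|lam.im| * |t|) ^ 2) := by
    rw [Umat_sub_UmatN hx.1.le hK]
    exact opNorm_integral_mul_U0_le (by linarith [hx.1]) hF hε hbound lam
  refine ⟨fun lam => ?_, fun lam hlam => ?_⟩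
  · have hlen : ∫ t in -x..x, Real.exp (|(lam : ℂ).im| * |t|) ^ 2 = 2 * x := by simp; ring
    rw [mul_comm]
    simpa only [hlen] using key lam
  · rw [← integral_sq_exp_mul_abs (abs_pos.2 hlam).ne' hx.1.le]
    exact key lam

/-- `L²`-based uniform bounds for `U(λ,x) − U^N(λ,x)`. -/
theorem statement18 (b : ℝ) (hb : 0 < b) (p q : ℝ → ℂ)
    (hQ : IntegrableOn (diracPot p q) (Set.Icc 0 b))
    (K : ℝ → ℝ → M2)
    (hker : IsTransKernel b (diracPot p q) K)
    (hKint : ∀ y ∈ Set.Ioc 0 b, IntegrableOn (fun t => K y t) (Set.Icc (-y) y))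
    (N : ℕ) (x : ℝ) (hx : x ∈ Set.Ioc 0 b) (ε₂ : ℝ) (hε : 0 ≤ ε₂)
    (hbound : (∫⁻ t in Set.Ioc (-x) x,
        ENNReal.ofReal (opNorm (K x t - KN K N x t) ^ 2)) ≤ ENNReal.ofReal (ε₂ ^ 2)) :
    (∀ lam : ℝ, opNorm (Umat K (lam : ℂ) x - UmatN K N (lam : ℂ) x)
        ≤ Real.sqrt (2 * x) * ε₂) ∧
    (∀ lam : ℂ, lam.im ≠ 0 → opNorm (Umat K lam x - UmatN K N lam x)
        ≤ ε₂ * Real.sqrt ((Real.exp (2 * |lam.im| * x) - 1) / |lam.im|)) :=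
  statement18_general b K hKint N x hx ε₂ hε hbound
end
end

section
/- Let K : Ω⁺ → M₂ be continuous, and for each integer k ≥ 0 define η_k(x) := x^k·I + ∫_{−x}^{x} K(x,t)·t^k dt (the image of t^k·I under the Volterra transmutation operator with kernel K). Write the Legendre polynomial of degree n as P_n(x) = Σ_{k=0}^{n} l_{k,n}·x^k. Then for every n ≥ 0 and every x ∈ (0,b], the Fourier–Legendre coefficient K_n satisfies K_n(x) = ((2n+1)/2)·[ −I + Σ_{k=0}^{n} (l_{k,n}/x^k)·η_k(x) ]. -/
noncomputable section

open MeasureTheory Set Filter Topology Polynomial intervalIntegral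

attribute [local instance] Matrix.normedAddCommGroup Matrix.normedSpace

/-! Expanding `P_n(t/x) = Σ l_{k,n} tᵏ/xᵏ` and integrating term by term gives
`K_n(x) = ((2n+1)/2) Σ (l_{k,n}/xᵏ) ∫ tᵏ K(x,t) dt`; the extra terms `l_{k,n}·I` coming from the
`xᵏ·I` parts of the `η_k` add up to `P_n(1)·I = I` and cancel the `-I`. -/

theorem iterate_derivative_X_sub_C_pow_mul_eval {R : Type*} [CommRing R] (a : R) (n : ℕ)
    (g : R[X]) : (derivative^[n] ((X - C a) ^ n * g)).eval a = n.factorial * g.eval a := by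
  induction n generalizing g with
  | zero => simp
  | succ n ih =>
    have hderiv : derivative ((X - C a) ^ (n + 1) * g)
        = (X - C a) ^ n * (C ((n : R) + 1) * g + (X - C a) * derivative g) := by
      rw [derivative_mul, derivative_pow]
      simp only [derivative_sub, derivative_X, derivative_C, sub_zero, Nat.cast_add,
        Nat.cast_one, Nat.add_sub_cancel, map_add, map_one, C_eq_natCast]
      ring
    rw [Function.iterate_succ_apply, hderiv, ih]
    simp only [map_add, map_natCast, map_one, eval_add, eval_mul, eval_natCast, eval_one,
      eval_sub, eval_X, eval_C, sub_self, zero_mul, add_zero, Nat.factorial_succ, Nat.cast_mul,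
      Nat.cast_add, Nat.cast_one]
    ring

theorem legendreP_eval_one (n : ℕ) : (legendreP n).eval 1 = 1 := by
  have hfactor : (X ^ 2 - 1 : ℝ[X]) ^ n = (X - C 1) ^ n * (X + 1) ^ n := by
    rw [← mul_pow]; simp only [map_one]; ring
  rw [legendreP, eval_smul, hfactor, iterate_derivative_X_sub_C_pow_mul_eval]
  have : (n.factorial : ℝ) ≠ 0 := by positivity
  norm_num [smul_eq_mul]
  field_simp

theorem legendreP_natDegree_le (n : ℕ) : (legendreP n).natDegree ≤ n := by
  have hdeg : ((X ^ 2 - 1 : ℝ[X]) ^ n).natDegree ≤ 2 * n := by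
    refine natDegree_pow_le.trans ?_
    rw [mul_comm]
    gcongr
    exact (natDegree_sub_le _ _).trans (by simp)
  refine (natDegree_smul_le _ _).trans ((natDegree_iterate_derivative _ n).trans ?_)
  omega

theorem sum_coeff_legendreP (n : ℕ) : ∑ k ∈ Finset.range (n + 1), (legendreP n).coeff k = 1 := by
  simpa [eval_eq_sum_range' (Nat.lt_succ_of_le (legendreP_natDegree_le n))] using
    legendreP_eval_one n

theorem integral_eval_div_smul_eq_sum {E : Type*} [NormedAddCommGroup E] [NormedSpace ℝ E]
    {p : ℝ[X]} {N : ℕ} (hp : p.natDegree < N) {f : ℝ → E} {a b : ℝ}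
    (hf : IntervalIntegrable f (volume : Measure ℝ) a b) (x : ℝ) :
    ∫ t in a..b, p.eval (t / x) • f t
      = ∑ k ∈ Finset.range N, (p.coeff k / x ^ k) • ∫ t in a..b, t ^ k • f t := by
  have hpow : ∀ k ∈ Finset.range N, IntervalIntegrable
      (fun t => (p.coeff k / x ^ k) • t ^ k • f t) volume a b :=
    fun k _ => (hf.continuousOn_smul (continuous_pow k).continuousOn).smul _
  simp_rw [← intervalIntegral.integral_smul, ← intervalIntegral.integral_finsetSum hpow]
  refine intervalIntegral.integral_congr fun t _ => ?_
  simp only [eval_eq_sum_range' hp, Finset.sum_smul, smul_smul, div_pow]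
  refine Finset.sum_congr rfl fun k _ => ?_
  ring_nf

theorem neg_one_add_sum_div_pow_smul {A : Type*} [Ring A] [Module ℝ A] {N : ℕ} {c : ℕ → ℝ}
    (hc : ∑ k ∈ Finset.range N, c k = 1) {x : ℝ} (hx : x ≠ 0) (J : ℕ → A) :
    -1 + ∑ k ∈ Finset.range N, (c k / x ^ k) • ((x ^ k) • (1 : A) + J k)
      = ∑ k ∈ Finset.range N, (c k / x ^ k) • J k := by
  simp only [smul_add, smul_smul, div_mul_cancel₀ _ (pow_ne_zero _ hx), Finset.sum_add_distrib,
    ← Finset.sum_smul, hc, one_smul, neg_add_cancel_left]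

theorem ContinuousOn.continuousOn_slice_omegaPlus {b : ℝ} {K : ℝ → ℝ → M2}
    (hK : ContinuousOn (fun z : ℝ × ℝ => K z.1 z.2) (OmegaPlus b)) {x : ℝ} (hx : x ∈ Ioc 0 b) :
    ContinuousOn (K x) (uIcc (-x) x) := by
  refine hK.comp ((continuous_const.prodMk continuous_id).continuousOn) fun t ht => ?_
  rw [uIcc_of_le (by linarith [hx.1])] at ht
  exact ⟨hx.1.le, hx.2, abs_le.mpr ht⟩

theorem statement19_general (b : ℝ) (K : ℝ → ℝ → M2)
    (hK : ContinuousOn (fun z : ℝ × ℝ => K z.1 z.2) (OmegaPlus b)) :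
    ∀ n : ℕ, ∀ x ∈ Set.Ioc 0 b,
      Kcoef K n x = ((2 * (n : ℝ) + 1) / 2) •
        (-(1 : M2) + ∑ k ∈ Finset.range (n + 1),
          ((legendreP n).coeff k / x ^ k) •
            ((x ^ k : ℝ) • (1 : M2) + ∫ t in (-x)..x, (t ^ k : ℝ) • K x t)) := by
  intro n x hx
  have hKx := (hK.continuousOn_slice_omegaPlus hx).intervalIntegrable (μ := volume)
  rw [neg_one_add_sum_div_pow_smul (sum_coeff_legendreP n) hx.1.ne', Kcoef,
    integral_eval_div_smul_eq_sum (Nat.lt_succ_of_le (legendreP_natDegree_le n)) hKx]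

/-- the Fourier–Legendre coefficients in terms of the images `η_k` of the powers
`tᵏ·I` under the Volterra transmutation operator. -/
theorem statement19 (b : ℝ) (hb : 0 < b) (K : ℝ → ℝ → M2)
    (hK : ContinuousOn (fun z : ℝ × ℝ => K z.1 z.2) (OmegaPlus b)) :
    ∀ n : ℕ, ∀ x ∈ Set.Ioc 0 b,
      Kcoef K n x = ((2 * (n : ℝ) + 1) / 2) •
        (-(1 : M2) + ∑ k ∈ Finset.range (n + 1),
          ((legendreP n).coeff k / x ^ k) •
            ((x ^ k : ℝ) • (1 : M2) + ∫ t in (-x)..x, (t ^ k : ℝ) • K x t)) :=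
  statement19_general b K hK

end
end
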